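/- arXiv:2306.00312 — 5 statements merged into one kernel-verified Lean document; each statement's English description precedes it below -/
import Mathlib

section
/- Let X be a measurable space and Y a nonempty finite type. Let S and T be probability measures on X × Y with marginals S_X, T_X on X, and let ĥ, h' : X → Y be measurable classifiers. Assume T{(x,y) | ĥ x ≠ y} − S{(x,y) | ĥ x ≠ y} ≤ T_X{x | ĥ x ≠ h' x} − S_X{x | ĥ x ≠ h' x}. Fix integers n_S, n_T ≥ 1 and δ ∈ (0,1), and let P be the product measure S^{⊗n_S} ⊗ T_X^{⊗n_T} on (X × Y)^{n_S} × X^{n_T}, with coordinates ((x_i, y_i))_{i=1}^{n_S} and (x'_j)_{j=1}^{n_T}. Then with P-probability at least 1 − δ: T{(x,y) | ĥ x ≠ y} ≤ (1/n_S)·Σ_{i=1}^{n_S} 1{ĥ x_i ≠ y_i} + (1/n_T)·Σ_{j=1}^{n_T} 1{ĥ x'_j ≠ h' x'_j} − (1/n_S)·Σ_{i=1}^{n_S} 1{ĥ x_i ≠ h' x_i} + sqrt((n_S + 4·n_T)·log(1/δ) / (2·n_S·n_T)). -/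
set_option maxHeartbeats 1000000

open MeasureTheory Finset Real

lemma hoeff_aux (p : ℝ) (hp0 : 0 ≤ p) (hp1 : p ≤ 1) (h : ℝ) :
    (1-p) * exp (-(p*h)) + p * exp ((1-p)*h) ≤ exp (h^2/8) := by
  set D : ℝ → ℝ := fun u => 1 - p + p * exp u with hD
  have hDpos : ∀ u, 0 < D u := by
    intro u
    rcases eq_or_lt_of_le hp1 with h1 | h1
    · simp only [hD, ← h1]
      nlinarith [exp_pos u]
    · have := mul_nonneg hp0 (exp_pos u).le
      simp only [hD]; nlinarith
  set F : ℝ → ℝ := fun u => u^2/8 + p*u - log (D u) with hF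
  set G : ℝ → ℝ := fun u => u/4 + p - p * exp u / D u with hG
  have hDd : ∀ u, HasDerivAt D (p * exp u) u := fun u =>
    ((Real.hasDerivAt_exp u).const_mul p).const_add (1-p)
  have hFd : ∀ u, HasDerivAt F (G u) u := by
    intro u
    have h1 : HasDerivAt (fun u : ℝ => u^2/8) (u/4) u := by
      have := (hasDerivAt_pow 2 u).div_const 8
      refine this.congr_deriv ?_; norm_num; ring
    have h2 : HasDerivAt (fun u : ℝ => p*u) p u := by
      simpa using (hasDerivAt_id u).const_mul p
    have h3 : HasDerivAt (fun u => log (D u)) ((D u)⁻¹ * (p * exp u)) u :=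
      (Real.hasDerivAt_log (hDpos u).ne').comp u (hDd u)
    have := (h1.add h2).sub h3
    refine this.congr_deriv ?_
    simp only [hG]; field_simp
  have hGd : ∀ u, HasDerivAt G
      (1/4 - ((p*exp u)*(D u) - (p*exp u)*(p*exp u))/(D u)^2) u := by
    intro u
    have h1 : HasDerivAt (fun u : ℝ => u/4 + p) (1/4) u := by
      simpa using ((hasDerivAt_id u).div_const 4).add_const p
    have h2 : HasDerivAt (fun u => p * exp u / D u)
        (((p*exp u)*(D u) - (p*exp u)*(p*exp u))/(D u)^2) u :=
      ((Real.hasDerivAt_exp u).const_mul p).div (hDd u) (hDpos u).ne'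
    have := h1.sub h2
    exact this
  have hG'nonneg : ∀ u, 0 ≤ 1/4 - ((p*exp u)*(D u) - (p*exp u)*(p*exp u))/(D u)^2 := by
    intro u
    rw [sub_nonneg, div_le_iff₀ (pow_pos (hDpos u) 2)]
    have hx : 0 ≤ p * exp u := mul_nonneg hp0 (exp_pos u).le
    have hy : 0 ≤ 1 - p := by linarith
    simp only [hD]
    nlinarith [sq_nonneg (p * exp u - (1-p))]
  have hGmono : Monotone G :=
    monotone_of_deriv_nonneg (fun u => (hGd u).differentiableAt) (fun u => by
      rw [(hGd u).deriv]; exact hG'nonneg u)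
  have hG0 : G 0 = 0 := by simp [hG, hD]
  have hF0 : F 0 = 0 := by simp [hF, hD]
  have hFnonneg : 0 ≤ F h := by
    rcases le_total 0 h with hh | hh
    · have : MonotoneOn F (Set.Ici 0) := by
        apply monotoneOn_of_deriv_nonneg (convex_Ici 0)
          (fun u _ => ((hFd u).differentiableAt).continuousAt.continuousWithinAt)
          (fun u _ => ((hFd u).differentiableAt).differentiableWithinAt)
        intro u hu
        rw [(hFd u).deriv]
        rw [interior_Ici] at hu
        calc (0:ℝ) = G 0 := hG0.symm
        _ ≤ G u := hGmono (le_of_lt hu)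
      calc (0:ℝ) = F 0 := hF0.symm
      _ ≤ F h := this (by simp) (by simpa using hh) hh
    · have : AntitoneOn F (Set.Iic 0) := by
        apply antitoneOn_of_deriv_nonpos (convex_Iic 0)
          (fun u _ => ((hFd u).differentiableAt).continuousAt.continuousWithinAt)
          (fun u _ => ((hFd u).differentiableAt).differentiableWithinAt)
        intro u hu
        rw [(hFd u).deriv]
        rw [interior_Iic] at hu
        calc G u ≤ G 0 := hGmono (le_of_lt hu)
        _ = 0 := hG0
      calc (0:ℝ) = F 0 := hF0.symm
      _ ≤ F h := this (by simpa using hh) (by simp) hh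
  have e1 : exp ((1-p)*h) = exp h * exp (-(p*h)) := by
    rw [← Real.exp_add]; congr 1; ring
  have hLHS : (1-p) * exp (-(p*h)) + p * exp ((1-p)*h) = exp (-(p*h)) * D h := by
    simp only [hD]; rw [e1]; ring
  rw [hLHS]
  have h1 : log (D h) ≤ h^2/8 + p*h := by
    have := hFnonneg; simp only [hF] at this; linarith
  have h2 : D h ≤ exp (h^2/8 + p*h) := by
    calc D h = exp (log (D h)) := (exp_log (hDpos h)).symm
    _ ≤ _ := exp_le_exp.2 h1
  calc exp (-(p*h)) * D h ≤ exp (-(p*h)) * exp (h^2/8 + p*h) :=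
        mul_le_mul_of_nonneg_left h2 (exp_pos _).le
  _ = exp (h^2/8) := by rw [← Real.exp_add]; congr 1; ring

lemma integrable_of_bdd {α : Type*} [MeasurableSpace α] {μ : Measure α} [IsFiniteMeasure μ]
    {f : α → ℝ} (hf : Measurable f) {C : ℝ} (h : ∀ x, |f x| ≤ C) : Integrable f μ :=
  Integrable.mono' (integrable_const C) hf.aestronglyMeasurable (Filter.Eventually.of_forall h)

lemma mgf_single {α : Type*} [MeasurableSpace α] (μ : Measure α) [IsProbabilityMeasure μ]
    {f : α → ℝ} (hf : Measurable f) {a b : ℝ} (t : ℝ) (hab : ∀ x, f x ∈ Set.Icc a b) :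
    ∫ x, exp (t * f x) ∂μ ≤ exp (t * (∫ x, f x ∂μ) + t^2*(b-a)^2/8) := by
  have hne : Nonempty α := by
    by_contra hc
    rw [not_nonempty_iff] at hc
    have h1 := measure_univ (μ := μ)
    rw [Set.univ_eq_empty_iff.2 hc, measure_empty] at h1
    exact zero_ne_one h1
  obtain ⟨x0⟩ := hne
  have hab' : a ≤ b := le_trans (hab x0).1 (hab x0).2
  set C : ℝ := max |a| |b| with hC
  have habs : ∀ x, |f x| ≤ C := by
    intro x
    rw [abs_le]
    constructor
    · calc -C ≤ -|a| := neg_le_neg (le_max_left _ _)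
      _ ≤ a := neg_abs_le a
      _ ≤ f x := (hab x).1
    · calc f x ≤ b := (hab x).2
      _ ≤ |b| := le_abs_self b
      _ ≤ C := le_max_right _ _
  have hInt_f : Integrable f μ := integrable_of_bdd hf habs
  have hInt_exp : Integrable (fun x => exp (t * f x)) μ := by
    apply integrable_of_bdd (hf.const_mul t).exp
    intro x
    rw [abs_of_pos (exp_pos _)]
    apply exp_le_exp.2
    calc t * f x ≤ |t * f x| := le_abs_self _
    _ = |t| * |f x| := abs_mul _ _
    _ ≤ |t| * C := by
        apply mul_le_mul_of_nonneg_left (habs x) (abs_nonneg t)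
  rcases eq_or_lt_of_le hab' with heq | hlt
  · subst heq
    have hfa : ∀ x, f x = a := fun x => le_antisymm (hab x).2 (hab x).1
    have h1 : ∫ x, exp (t * f x) ∂μ = exp (t * a) := by
      rw [show (fun x => exp (t * f x)) = fun _ => exp (t * a) by
        funext x; rw [hfa x]]
      simp
    have h2 : ∫ x, f x ∂μ = a := by
      rw [show f = fun _ => a from funext hfa]; simp
    rw [h1, h2]
    simp
  · have hba : b - a ≠ 0 := ne_of_gt (by linarith)
    set m : ℝ := ∫ x, f x ∂μ with hm
    have ham : a ≤ m := by
      have := integral_mono (integrable_const a) hInt_f (fun x => (hab x).1)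
      simpa using this
    have hmb : m ≤ b := by
      have := integral_mono hInt_f (integrable_const b) (fun x => (hab x).2)
      simpa using this
    have hptwise : ∀ x, exp (t * f x) ≤
        ((b - f x)*exp (t*a) + (f x - a)*exp (t*b))/(b-a) := by
      intro x
      have hw1 : 0 ≤ (b - f x)/(b-a) := div_nonneg (by linarith [(hab x).2]) (by linarith)
      have hw2 : 0 ≤ (f x - a)/(b-a) := div_nonneg (by linarith [(hab x).1]) (by linarith)
      have hsum : (b - f x)/(b-a) + (f x - a)/(b-a) = 1 := by field_simp; ring
      have := convexOn_exp.2 (Set.mem_univ (t*a)) (Set.mem_univ (t*b)) hw1 hw2 hsum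
      simp only [smul_eq_mul] at this
      have harg : (b - f x)/(b-a) * (t*a) + (f x - a)/(b-a) * (t*b) = t * f x := by
        field_simp; ring
      rw [harg] at this
      calc exp (t * f x) ≤ (b - f x)/(b-a) * exp (t*a) + (f x - a)/(b-a) * exp (t*b) := this
      _ = ((b - f x)*exp (t*a) + (f x - a)*exp (t*b))/(b-a) := by field_simp
    have hrhseq : (fun x => ((b - f x)*exp (t*a) + (f x - a)*exp (t*b))/(b-a)) =
        (fun x => ((exp (t*b) - exp (t*a))/(b-a)) * f x
          + (b*exp (t*a) - a*exp (t*b))/(b-a)) := by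
      funext x; field_simp; ring
    have hInt_rhs : Integrable
        (fun x => ((b - f x)*exp (t*a) + (f x - a)*exp (t*b))/(b-a)) μ := by
      rw [hrhseq]
      exact (hInt_f.const_mul _).add (integrable_const _)
    have hstep1 : ∫ x, exp (t * f x) ∂μ ≤
        ((b - m)*exp (t*a) + (m - a)*exp (t*b))/(b-a) := by
      calc ∫ x, exp (t * f x) ∂μ
          ≤ ∫ x, ((b - f x)*exp (t*a) + (f x - a)*exp (t*b))/(b-a) ∂μ :=
            integral_mono hInt_exp hInt_rhs hptwise
      _ = ((exp (t*b) - exp (t*a))/(b-a)) * m + (b*exp (t*a) - a*exp (t*b))/(b-a) := by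
            rw [hrhseq, integral_add (hInt_f.const_mul _) (integrable_const _),
              integral_const_mul, integral_const]
            simp [hm]
      _ = ((b - m)*exp (t*a) + (m - a)*exp (t*b))/(b-a) := by field_simp; ring
    set p : ℝ := (m - a)/(b-a) with hp
    set hh : ℝ := t*(b-a) with hhh
    have hp0 : 0 ≤ p := div_nonneg (by linarith) (by linarith)
    have hp1 : p ≤ 1 := by
      rw [hp, div_le_one (by linarith)]; linarith
    have key := hoeff_aux p hp0 hp1 hh
    have hpa : t*m + -(p*hh) = t*a := by
      rw [hp, hhh]; field_simp; ring
    have hpb : t*m + (1-p)*hh = t*b := by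
      rw [hp, hhh]; field_simp; ring
    have e1 : exp (t*m) * exp (-(p*hh)) = exp (t*a) := by rw [← Real.exp_add, hpa]
    have e2 : exp (t*m) * exp ((1-p)*hh) = exp (t*b) := by rw [← Real.exp_add, hpb]
    have hfactor : ((b - m)*exp (t*a) + (m - a)*exp (t*b))/(b-a) =
        exp (t*m) * ((1-p) * exp (-(p*hh)) + p * exp ((1-p)*hh)) := by
      have : exp (t*m) * ((1-p) * exp (-(p*hh)) + p * exp ((1-p)*hh))
          = (1-p)*(exp (t*m) * exp (-(p*hh))) + p*(exp (t*m) * exp ((1-p)*hh)) := by ring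
      rw [this, e1, e2, hp]
      field_simp
      ring
    have hfinal : exp (t*m) * ((1-p) * exp (-(p*hh)) + p * exp ((1-p)*hh)) ≤
        exp (t*m + t^2*(b-a)^2/8) := by
      calc exp (t*m) * ((1-p) * exp (-(p*hh)) + p * exp ((1-p)*hh))
          ≤ exp (t*m) * exp (hh^2/8) := mul_le_mul_of_nonneg_left key (exp_pos _).le
      _ = exp (t*m + t^2*(b-a)^2/8) := by
          rw [← Real.exp_add]; congr 1; rw [hhh]; ring
    calc ∫ x, exp (t * f x) ∂μ ≤ ((b - m)*exp (t*a) + (m - a)*exp (t*b))/(b-a) := hstep1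
    _ = _ := hfactor
    _ ≤ _ := hfinal

lemma inner_null_prod {α β : Type*} [MeasurableSpace α] [MeasurableSpace β]
    (μ : Measure α) (ν : Measure β) [SigmaFinite ν] {ZA : Set α} {ZB : Set β}
    (hA : ∀ B, MeasurableSet B → B ⊆ ZA → μ B = 0)
    (hB : ∀ B, MeasurableSet B → B ⊆ ZB → ν B = 0)
    {K : Set (α × β)} (hK : MeasurableSet K)
    (hsub : K ⊆ (ZA ×ˢ Set.univ) ∪ (Set.univ ×ˢ ZB)) : μ.prod ν K = 0 := by
  rw [Measure.prod_apply hK]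
  have hmeas : Measurable fun x => ν (Prod.mk x ⁻¹' K) :=
    measurable_measure_prodMk_left hK
  have hnull : ∀ x ∉ ZA, ν (Prod.mk x ⁻¹' K) = 0 := by
    intro x hx
    apply hB _ (measurable_prodMk_left hK)
    intro y hy
    rcases hsub hy with h | h
    · exact absurd h.1 hx
    · exact h.2
  have hset : MeasurableSet {x | ν (Prod.mk x ⁻¹' K) ≠ 0} :=
    (hmeas (measurableSet_singleton 0)).compl
  have hz : μ {x | ν (Prod.mk x ⁻¹' K) ≠ 0} = 0 := by
    apply hA _ hset
    intro x hx
    by_contra hxA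
    exact hx (hnull x hxA)
  rw [lintegral_eq_zero_iff hmeas]
  exact ae_iff.2 hz

lemma inner_null_pi {α : Type*} [MeasurableSpace α] (μ : Measure α) [IsProbabilityMeasure μ]
    {D : Set α} (hD : ∀ B, MeasurableSet B → B ⊆ D → μ B = 0) :
    ∀ (n : ℕ) (K : Set (Fin n → α)), MeasurableSet K →
      (K ⊆ ⋃ i, (fun ω => ω i) ⁻¹' D) → Measure.pi (fun _ : Fin n => μ) K = 0 := by
  intro n
  induction n with
  | zero =>
    intro K hK hsub
    have : K = ∅ := by
      apply Set.eq_empty_of_subset_empty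
      simpa using hsub
    simp [this]
  | succ n ih =>
    intro K hK hsub
    set e := MeasurableEquiv.piFinSuccAbove (fun _ : Fin (n+1) => α) 0 with he
    have hmp := measurePreserving_piFinSuccAbove (fun _ : Fin (n+1) => μ) 0
    have himg : MeasurableSet (e '' K) :=
      (MeasurableEquiv.measurableEmbedding e).measurableSet_image.2 hK
    have hKval : Measure.pi (fun _ : Fin (n+1) => μ) K =
        (μ.prod (Measure.pi fun _ : Fin n => μ)) (e '' K) := by
      rw [← hmp.map_eq, Measure.map_apply e.measurable himg,
        Set.preimage_image_eq _ e.injective]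
    rw [hKval]
    apply inner_null_prod μ _ hD (fun B hB h => ih B hB h) himg
    rintro p ⟨ω, hω, rfl⟩
    obtain ⟨i, hi⟩ := Set.mem_iUnion.1 (hsub hω)
    rcases Fin.eq_zero_or_eq_succ i with h0 | ⟨j, rfl⟩
    · left
      refine Set.mem_prod.2 ⟨?_, Set.mem_univ _⟩
      subst h0
      simpa [he, MeasurableEquiv.piFinSuccAbove] using hi
    · right
      refine Set.mem_prod.2 ⟨Set.mem_univ _, ?_⟩
      refine Set.mem_iUnion.2 ⟨j, ?_⟩
      simpa [he, MeasurableEquiv.piFinSuccAbove, Fin.zero_succAbove, Fin.tail] using hi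

lemma diff_toMeasurable_inner_null {α : Type*} [MeasurableSpace α]
    (μ : Measure α) [IsFiniteMeasure μ] (s : Set α) :
    ∀ B, MeasurableSet B → B ⊆ toMeasurable μ s \ s → μ B = 0 := by
  intro B hB hsub
  by_contra hpos
  have hBsub : B ⊆ toMeasurable μ s := fun x hx => (hsub hx).1
  have hdisj : s ∩ B = ∅ := by
    ext x
    simp only [Set.mem_inter_iff, Set.mem_empty_iff_false, iff_false, not_and]
    intro hxs hxB
    exact (hsub hxB).2 hxs
  have hssub : s ⊆ toMeasurable μ s \ B := by
    intro x hx
    refine ⟨subset_toMeasurable μ s hx, fun hxB => ?_⟩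
    have : x ∈ s ∩ B := ⟨hx, hxB⟩
    rw [hdisj] at this
    exact this
  have h1 : μ s ≤ μ (toMeasurable μ s) - μ B := by
    rw [← measure_diff hBsub hB.nullMeasurableSet (measure_ne_top μ B)]
    exact measure_mono hssub
  rw [measure_toMeasurable] at h1
  have hle : μ B ≤ μ s := by
    calc μ B ≤ μ (toMeasurable μ s) := measure_mono hBsub
    _ = μ s := measure_toMeasurable s
  have hs0 : μ s ≠ 0 := fun h => hpos (le_antisymm (h ▸ hle) zero_le)
  have := ENNReal.sub_lt_self (measure_ne_top μ s) hs0 hpos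
  exact absurd h1 (not_le.2 this)

lemma integral_pow_pi {α : Type*} [MeasurableSpace α] (μ : Measure α) [IsProbabilityMeasure μ]
    (n : ℕ) (g : α → ℝ) :
    ∫ v : Fin n → α, ∏ i, g (v i) ∂(Measure.pi fun _ : Fin n => μ) = (∫ u, g u ∂μ) ^ n := by
  letI : MeasureSpace α := ⟨μ⟩
  haveI : SigmaFinite (volume : Measure α) := inferInstanceAs (SigmaFinite μ)
  have h := integral_fintype_prod_eq_prod (ι := Fin n) (fun _ : Fin n => g) (μ := fun _ => μ)
  simpa [Finset.prod_const, Finset.card_univ] using h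

lemma integral_ite_one {α : Type*} [MeasurableSpace α] (μ : Measure α) {s : Set α}
    (hs : MeasurableSet s) [DecidablePred (· ∈ s)] :
    ∫ x, (if x ∈ s then (1:ℝ) else 0) ∂μ = (μ s).toReal := by
  rw [show (fun x => if x ∈ s then (1:ℝ) else 0) = s.indicator (fun _ => 1) by
    funext x; by_cases h : x ∈ s <;> simp [Set.indicator_apply, h]]
  exact integral_indicator_one hs

/-- Theorem 3.4 (Main Bound): under Assumption 2, with probability ≥ 1 − δ over
n_S labeled source samples and n_T unlabeled target samples,
ε_T(ĥ) ≤ ε_Ŝ(ĥ) + Δ̂(ĥ, h') + sqrt((n_S + 4 n_T) log(1/δ) / (2 n_S n_T)). -/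
theorem main_bound
    {X : Type*} [MeasurableSpace X]
    {Y : Type*} [Fintype Y] [Nonempty Y] [DecidableEq Y] [MeasurableSpace Y]
    (S T : Measure (X × Y)) [IsProbabilityMeasure S] [IsProbabilityMeasure T]
    (hhat h' : X → Y) (hhhat : Measurable hhat) (hh' : Measurable h')
    (hassum :
      (T {p : X × Y | hhat p.1 ≠ p.2}).toReal - (S {p : X × Y | hhat p.1 ≠ p.2}).toReal ≤
        ((T.map Prod.fst) {x | hhat x ≠ h' x}).toReal
          - ((S.map Prod.fst) {x | hhat x ≠ h' x}).toReal)
    (nS nT : ℕ) (hnS : 1 ≤ nS) (hnT : 1 ≤ nT)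
    (δ : ℝ) (hδ0 : 0 < δ) (hδ1 : δ < 1) :
    ENNReal.ofReal (1 - δ) ≤
      ((Measure.pi fun _ : Fin nS => S).prod
        (Measure.pi fun _ : Fin nT => T.map Prod.fst))
        {ω : (Fin nS → X × Y) × (Fin nT → X) |
          (T {p : X × Y | hhat p.1 ≠ p.2}).toReal ≤
            (1 / (nS : ℝ)) * ∑ i : Fin nS, (if hhat (ω.1 i).1 ≠ (ω.1 i).2 then (1 : ℝ) else 0)
            + (1 / (nT : ℝ)) * ∑ j : Fin nT, (if hhat (ω.2 j) ≠ h' (ω.2 j) then (1 : ℝ) else 0)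
            - (1 / (nS : ℝ)) * ∑ i : Fin nS, (if hhat (ω.1 i).1 ≠ h' (ω.1 i).1 then (1 : ℝ) else 0)
            + Real.sqrt (((nS : ℝ) + 4 * (nT : ℝ)) * Real.log (1 / δ)
                / (2 * (nS : ℝ) * (nT : ℝ)))} := by
  classical
  have hnS' : (0:ℝ) < nS := by exact_mod_cast hnS
  have hnT' : (0:ℝ) < nT := by exact_mod_cast hnT
  set E1 : Set (X × Y) := {p | hhat p.1 ≠ p.2} with hE1def
  set E2 : Set X := {x | hhat x ≠ h' x} with hE2def
  set SX : Measure X := S.map Prod.fst with hSXdef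
  set TX : Measure X := T.map Prod.fst with hTXdef
  haveI hSXp : IsProbabilityMeasure SX := Measure.isProbabilityMeasure_map measurable_fst.aemeasurable
  haveI hTXp : IsProbabilityMeasure TX := Measure.isProbabilityMeasure_map measurable_fst.aemeasurable
  set M1 : Set (X × Y) := toMeasurable S E1 with hM1def
  set M2 : Set X := toMeasurable SX E2 with hM2def
  set N2 : Set X := toMeasurable TX E2 with hN2def
  have hM1m : MeasurableSet M1 := measurableSet_toMeasurable _ _
  have hM2m : MeasurableSet M2 := measurableSet_toMeasurable _ _
  have hN2m : MeasurableSet N2 := measurableSet_toMeasurable _ _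
  set L : ℝ := Real.log (1/δ) with hLdef
  have hL : 0 < L := Real.log_pos (by rw [lt_div_iff₀ hδ0]; linarith)
  set εr : ℝ := Real.sqrt (((nS : ℝ) + 4 * (nT : ℝ)) * L / (2 * (nS : ℝ) * (nT : ℝ))) with hεdef
  have hεpos : 0 < εr := Real.sqrt_pos.2 (by positivity)
  have hεsq : εr^2 = ((nS : ℝ) + 4 * (nT : ℝ)) * L / (2 * (nS : ℝ) * (nT : ℝ)) :=
    Real.sq_sqrt (by positivity)
  set fS : X × Y → ℝ := fun u => (if u ∈ M1 then (1:ℝ) else 0) - (if u.1 ∈ M2 then (1:ℝ) else 0)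
    with hfSdef
  set fT : X → ℝ := fun x => if x ∈ N2 then (1:ℝ) else 0 with hfTdef
  have hfSmeas : Measurable fS :=
    (Measurable.ite hM1m measurable_const measurable_const).sub
      (Measurable.ite (measurable_fst hM2m) measurable_const measurable_const)
  have hfTmeas : Measurable fT := Measurable.ite hN2m measurable_const measurable_const
  have hfSb : ∀ u, fS u ∈ Set.Icc (-1:ℝ) 1 := by
    intro u; simp only [hfSdef, Set.mem_Icc]; constructor <;> split_ifs <;> norm_num
  have hfTb : ∀ x, fT x ∈ Set.Icc (0:ℝ) 1 := by
    intro x; simp only [hfTdef, Set.mem_Icc]; constructor <;> split_ifs <;> norm_num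
  set mA : ℝ := ∫ u, fS u ∂S with hmAdef
  set mB : ℝ := ∫ x, fT x ∂TX with hmBdef
  set c : ℝ := mA + mB with hcdef
  set W : (Fin nS → X × Y) × (Fin nT → X) → ℝ := fun ω =>
    (1/(nS:ℝ)) * ∑ i, fS (ω.1 i) + (1/(nT:ℝ)) * ∑ j, fT (ω.2 j) with hWdef
  set P := (Measure.pi fun _ : Fin nS => S).prod (Measure.pi fun _ : Fin nT => TX) with hPdef
  haveI hPprob : IsProbabilityMeasure P := by
    rw [hPdef]; infer_instance
  have hWmeas : Measurable W := by
    apply Measurable.add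
    · exact (Finset.measurable_sum univ fun i _ =>
        hfSmeas.comp ((measurable_pi_apply i).comp measurable_fst)).const_mul _
    · exact (Finset.measurable_sum univ fun j _ =>
        hfTmeas.comp ((measurable_pi_apply j).comp measurable_snd)).const_mul _
  have hWb : ∀ ω, |W ω| ≤ 2 := by
    intro ω
    have h1 : |(1/(nS:ℝ)) * ∑ i, fS (ω.1 i)| ≤ 1 := by
      rw [abs_mul, abs_of_pos (by positivity : (0:ℝ) < 1/(nS:ℝ))]
      rw [div_mul_eq_mul_div, div_le_one hnS', one_mul]
      calc |∑ i, fS (ω.1 i)| ≤ ∑ i, |fS (ω.1 i)| := Finset.abs_sum_le_sum_abs _ _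
      _ ≤ ∑ _i : Fin nS, (1:ℝ) := Finset.sum_le_sum fun i _ => by
            rw [abs_le]
            exact ⟨(hfSb _).1, (hfSb _).2⟩
      _ = nS := by simp
    have h2 : |(1/(nT:ℝ)) * ∑ j, fT (ω.2 j)| ≤ 1 := by
      rw [abs_mul, abs_of_pos (by positivity : (0:ℝ) < 1/(nT:ℝ))]
      rw [div_mul_eq_mul_div, div_le_one hnT', one_mul]
      calc |∑ j, fT (ω.2 j)| ≤ ∑ j, |fT (ω.2 j)| := Finset.abs_sum_le_sum_abs _ _
      _ ≤ ∑ _j : Fin nT, (1:ℝ) := Finset.sum_le_sum fun j _ => by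
            rw [abs_le]
            constructor
            · linarith [(hfTb (ω.2 j)).1]
            · exact (hfTb _).2
      _ = nT := by simp
    calc |W ω| ≤ |(1/(nS:ℝ)) * ∑ i, fS (ω.1 i)| + |(1/(nT:ℝ)) * ∑ j, fT (ω.2 j)| :=
          abs_add_le _ _
    _ ≤ 2 := by linarith
  -- the value of c
  have hc_val : c = (S E1).toReal - (SX E2).toReal + (TX E2).toReal := by
    have hint1 : Integrable (fun u => if u ∈ M1 then (1:ℝ) else 0) S :=
      integrable_of_bdd (Measurable.ite hM1m measurable_const measurable_const)
        (C := 1) (fun u => by split_ifs <;> norm_num)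
    have hint2 : Integrable (fun u : X × Y => if u.1 ∈ M2 then (1:ℝ) else 0) S :=
      integrable_of_bdd (Measurable.ite (measurable_fst hM2m) measurable_const measurable_const)
        (C := 1) (fun u => by split_ifs <;> norm_num)
    have hmA : mA = (S M1).toReal - (S (Prod.fst ⁻¹' M2)).toReal := by
      rw [hmAdef]
      simp only [hfSdef]
      rw [integral_sub hint1 hint2, integral_ite_one S hM1m]
      congr 1
      exact integral_ite_one S (measurable_fst hM2m)
    have hmB : mB = (TX N2).toReal := by
      rw [hmBdef]
      simp only [hfTdef]
      exact integral_ite_one TX hN2m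
    have hfst : S (Prod.fst ⁻¹' M2) = SX M2 := (Measure.map_apply measurable_fst hM2m).symm
    rw [hcdef, hmA, hmB, hfst, hM1def, hM2def, hN2def, measure_toMeasurable,
      measure_toMeasurable, measure_toMeasurable]
  have hr_le_c : (T E1).toReal ≤ c := by
    have h1 : (S E1).toReal - (SX E2).toReal + (TX E2).toReal = c := hc_val.symm
    linarith [hassum]
  -- Chernoff
  set σ2 : ℝ := 1/(2*(nS:ℝ)) + 1/(8*(nT:ℝ)) with hσ2def
  have hσ2pos : 0 < σ2 := by positivity
  set t0 : ℝ := εr / (2*σ2) with ht0def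
  have ht0pos : 0 < t0 := by positivity
  have hmgf : ∫ ω, exp (t0 * (c - W ω)) ∂P ≤ exp (t0^2 * σ2) := by
    set g1 : X × Y → ℝ := fun u => exp (-(t0/(nS:ℝ)) * fS u) with hg1def
    set g2 : X → ℝ := fun x => exp (-(t0/(nT:ℝ)) * fT x) with hg2def
    have hexp : ∀ ω : (Fin nS → X × Y) × (Fin nT → X), exp (t0 * (c - W ω)) =
        exp (t0*c) * ((∏ i, g1 (ω.1 i)) * (∏ j, g2 (ω.2 j))) := by
      intro ω
      rw [hg1def, hg2def]
      rw [← Real.exp_sum, ← Real.exp_sum, ← Real.exp_add, ← Real.exp_add]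
      congr 1
      rw [hWdef]
      have e1 : ∑ i, (-(t0/(nS:ℝ)) * fS (ω.1 i)) = -(t0/(nS:ℝ)) * ∑ i, fS (ω.1 i) :=
        (Finset.mul_sum _ _ _).symm
      have e2 : ∑ j, (-(t0/(nT:ℝ)) * fT (ω.2 j)) = -(t0/(nT:ℝ)) * ∑ j, fT (ω.2 j) :=
        (Finset.mul_sum _ _ _).symm
      rw [e1, e2]
      field_simp
      ring
    have hb1 : ∫ u, g1 u ∂S ≤
        exp (-(t0/(nS:ℝ)) * mA + (-(t0/(nS:ℝ)))^2 * ((1:ℝ) - (-1))^2/8) :=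
      mgf_single S hfSmeas _ hfSb
    have hb2 : ∫ x, g2 x ∂TX ≤
        exp (-(t0/(nT:ℝ)) * mB + (-(t0/(nT:ℝ)))^2 * ((1:ℝ) - 0)^2/8) :=
      mgf_single TX hfTmeas _ hfTb
    have hg1nn : 0 ≤ ∫ u, g1 u ∂S := integral_nonneg fun u => (exp_pos _).le
    have hg2nn : 0 ≤ ∫ x, g2 x ∂TX := integral_nonneg fun x => (exp_pos _).le
    calc ∫ ω, exp (t0 * (c - W ω)) ∂P
        = exp (t0*c) * ((∫ u, g1 u ∂S)^nS * (∫ x, g2 x ∂TX)^nT) := by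
          rw [show (fun ω : (Fin nS → X × Y) × (Fin nT → X) => exp (t0 * (c - W ω))) = fun ω =>
            exp (t0*c) * ((∏ i, g1 (ω.1 i)) * (∏ j, g2 (ω.2 j))) from funext hexp]
          rw [hPdef, integral_const_mul,
            integral_prod_mul (f := fun v : Fin nS → X × Y => ∏ i, g1 (v i))
              (g := fun v : Fin nT → X => ∏ j, g2 (v j)),
            integral_pow_pi, integral_pow_pi]
    _ ≤ exp (t0*c) * ((exp (-(t0/(nS:ℝ)) * mA + (-(t0/(nS:ℝ)))^2 * ((1:ℝ) - (-1))^2/8))^nS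
          * (exp (-(t0/(nT:ℝ)) * mB + (-(t0/(nT:ℝ)))^2 * ((1:ℝ) - 0)^2/8))^nT) := by
          apply mul_le_mul_of_nonneg_left _ (exp_pos _).le
          exact mul_le_mul (pow_le_pow_left₀ hg1nn hb1 nS) (pow_le_pow_left₀ hg2nn hb2 nT)
            (pow_nonneg hg2nn nT) (pow_nonneg (exp_pos _).le nS)
    _ = exp (t0*c + nS * (-(t0/(nS:ℝ)) * mA + (-(t0/(nS:ℝ)))^2 * ((1:ℝ) - (-1))^2/8)
          + nT * (-(t0/(nT:ℝ)) * mB + (-(t0/(nT:ℝ)))^2 * ((1:ℝ) - 0)^2/8)) := by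
          rw [← Real.exp_nat_mul, ← Real.exp_nat_mul, ← Real.exp_add, ← Real.exp_add]
          congr 1
          ring
    _ = exp (t0^2 * σ2) := by
          congr 1
          rw [hcdef, hσ2def]
          field_simp
          ring
  have hint : Integrable (fun ω => exp (t0 * (c - W ω))) P := by
    apply integrable_of_bdd ((((hWmeas.const_sub c).const_mul t0)).exp)
    intro ω
    rw [abs_of_pos (exp_pos _)]
    apply exp_le_exp.2
    show t0 * (c - W ω) ≤ |t0| * (|c| + 2)
    calc t0 * (c - W ω) ≤ |t0 * (c - W ω)| := le_abs_self _
    _ = |t0| * |c - W ω| := abs_mul _ _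
    _ ≤ |t0| * (|c| + 2) := by
        apply mul_le_mul_of_nonneg_left _ (abs_nonneg t0)
        calc |c - W ω| ≤ |c| + |W ω| := abs_sub _ _
        _ ≤ |c| + 2 := by linarith [hWb ω]
  have hchern : (P {ω | εr ≤ c - W ω}).toReal ≤ δ := by
    have h := ProbabilityTheory.measure_ge_le_exp_mul_mgf (μ := P)
      (X := fun ω => c - W ω) (t := t0) εr ht0pos.le hint
    have hmgf' : ProbabilityTheory.mgf (fun ω => c - W ω) P t0 ≤ exp (t0^2 * σ2) := hmgf
    have harith : -t0 * εr + t0^2 * σ2 = -L := by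
      have h4 : εr^2 = 4*σ2*L := by
        rw [hεsq, hσ2def]; field_simp; ring
      rw [ht0def]
      field_simp
      nlinarith [h4, hσ2pos]
    calc (P {ω | εr ≤ c - W ω}).toReal
        ≤ exp (-t0 * εr) * ProbabilityTheory.mgf (fun ω => c - W ω) P t0 := h
    _ ≤ exp (-t0 * εr) * exp (t0^2 * σ2) :=
        mul_le_mul_of_nonneg_left hmgf' (exp_pos _).le
    _ = exp (-t0 * εr + t0^2 * σ2) := (Real.exp_add _ _).symm
    _ = exp (-L) := by rw [harith]
    _ = δ := by
        rw [hLdef, Real.log_div one_ne_zero (ne_of_gt hδ0), Real.log_one]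
        simp [Real.exp_log hδ0]
  -- good event
  set F : Set ((Fin nS → X × Y) × (Fin nT → X)) := {ω | c ≤ W ω + εr} with hFdef
  have hFm : MeasurableSet F := measurableSet_le measurable_const (hWmeas.add_const εr)
  have hPF : ENNReal.ofReal (1 - δ) ≤ P F := by
    have hFc : P Fᶜ ≤ ENNReal.ofReal δ := by
      have hsub' : Fᶜ ⊆ {ω | εr ≤ c - W ω} := by
        intro ω hω
        simp only [hFdef, Set.mem_compl_iff, Set.mem_setOf_eq, not_le] at hω
        simp only [Set.mem_setOf_eq]
        linarith
      calc P Fᶜ ≤ P {ω | εr ≤ c - W ω} := measure_mono hsub'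
      _ = ENNReal.ofReal ((P {ω | εr ≤ c - W ω}).toReal) :=
          (ENNReal.ofReal_toReal (measure_ne_top P _)).symm
      _ ≤ ENNReal.ofReal δ := ENNReal.ofReal_le_ofReal hchern
    have hcompl : P F = 1 - P Fᶜ := by
      have h := measure_compl (μ := P) hFm.compl (measure_ne_top _ _)
      rwa [compl_compl, measure_univ] at h
    rw [hcompl, show ENNReal.ofReal (1 - δ) = 1 - ENNReal.ofReal δ by
      rw [ENNReal.ofReal_sub _ hδ0.le, ENNReal.ofReal_one]]
    exact tsub_le_tsub_left hFc 1
  -- bad coincidence set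
  set ZS : Set (Fin nS → X × Y) := ⋃ i, (fun v => v i) ⁻¹' (M1 \ E1) with hZSdef
  set ZT : Set (Fin nT → X) := ⋃ j, (fun v => v j) ⁻¹' (N2 \ E2) with hZTdef
  have hZnull : ∀ K, MeasurableSet K → K ⊆ (ZS ×ˢ Set.univ) ∪ (Set.univ ×ˢ ZT) → P K = 0 := by
    intro K hK hsub
    exact inner_null_prod _ _
      (fun B hB h => inner_null_pi S (diff_toMeasurable_inner_null S E1) nS B hB h)
      (fun B hB h => inner_null_pi TX (diff_toMeasurable_inner_null TX E2) nT B hB h)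
      hK hsub
  -- main inclusion
  have hincl : ∀ ω, ω ∈ F → ω ∉ (ZS ×ˢ Set.univ) ∪ (Set.univ ×ˢ ZT) →
      (T E1).toReal ≤
        (1 / (nS : ℝ)) * ∑ i : Fin nS, (if hhat (ω.1 i).1 ≠ (ω.1 i).2 then (1 : ℝ) else 0)
        + (1 / (nT : ℝ)) * ∑ j : Fin nT, (if hhat (ω.2 j) ≠ h' (ω.2 j) then (1 : ℝ) else 0)
        - (1 / (nS : ℝ)) * ∑ i : Fin nS, (if hhat (ω.1 i).1 ≠ h' (ω.1 i).1 then (1 : ℝ) else 0)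
        + εr := by
    intro ω hωF hωZ
    have hωF' : c ≤ W ω + εr := hωF
    have hnotS : ∀ i, ω.1 i ∉ M1 \ E1 := by
      intro i hi
      exact hωZ (Or.inl ⟨Set.mem_iUnion.2 ⟨i, hi⟩, Set.mem_univ _⟩)
    have hnotT : ∀ j, ω.2 j ∉ N2 \ E2 := by
      intro j hj
      exact hωZ (Or.inr ⟨Set.mem_univ _, Set.mem_iUnion.2 ⟨j, hj⟩⟩)
    have hS_le : ∀ i, fS (ω.1 i) ≤
        (if hhat (ω.1 i).1 ≠ (ω.1 i).2 then (1:ℝ) else 0)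
          - (if hhat (ω.1 i).1 ≠ h' (ω.1 i).1 then (1:ℝ) else 0) := by
      intro i
      have h1 : (if ω.1 i ∈ M1 then (1:ℝ) else 0)
          = (if hhat (ω.1 i).1 ≠ (ω.1 i).2 then (1:ℝ) else 0) := by
        by_cases hm : ω.1 i ∈ M1
        · have he : ω.1 i ∈ E1 := by
            by_contra hne
            exact hnotS i ⟨hm, hne⟩
          have he' : hhat (ω.1 i).1 ≠ (ω.1 i).2 := he
          rw [if_pos hm, if_pos he']
        · have he : ω.1 i ∉ E1 := fun h => hm (subset_toMeasurable S E1 h)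
          have he' : ¬ hhat (ω.1 i).1 ≠ (ω.1 i).2 := he
          rw [if_neg hm, if_neg he']
      have h2 : (if hhat (ω.1 i).1 ≠ h' (ω.1 i).1 then (1:ℝ) else 0)
          ≤ (if (ω.1 i).1 ∈ M2 then (1:ℝ) else 0) := by
        by_cases hd : hhat (ω.1 i).1 ≠ h' (ω.1 i).1
        · have hm2 : (ω.1 i).1 ∈ M2 := subset_toMeasurable SX E2 hd
          rw [if_pos hd, if_pos hm2]
        · rw [if_neg hd]
          split_ifs <;> norm_num
      simp only [hfSdef]
      linarith
    have hT_eq : ∀ j, fT (ω.2 j) = (if hhat (ω.2 j) ≠ h' (ω.2 j) then (1:ℝ) else 0) := by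
      intro j
      simp only [hfTdef]
      by_cases hm : ω.2 j ∈ N2
      · have he : ω.2 j ∈ E2 := by
          by_contra hne
          exact hnotT j ⟨hm, hne⟩
        have he' : hhat (ω.2 j) ≠ h' (ω.2 j) := he
        rw [if_pos hm, if_pos he']
      · have he : ω.2 j ∉ E2 := fun h => hm (subset_toMeasurable TX E2 h)
        have he' : ¬ hhat (ω.2 j) ≠ h' (ω.2 j) := he
        rw [if_neg hm, if_neg he']
    have hsum1 : (1/(nS:ℝ)) * ∑ i, fS (ω.1 i) ≤
        (1/(nS:ℝ)) * ∑ i : Fin nS, (if hhat (ω.1 i).1 ≠ (ω.1 i).2 then (1:ℝ) else 0)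
          - (1/(nS:ℝ)) * ∑ i : Fin nS, (if hhat (ω.1 i).1 ≠ h' (ω.1 i).1 then (1:ℝ) else 0) := by
      rw [← mul_sub, ← Finset.sum_sub_distrib]
      exact mul_le_mul_of_nonneg_left (Finset.sum_le_sum fun i _ => hS_le i) (by positivity)
    have hsum2 : (1/(nT:ℝ)) * ∑ j, fT (ω.2 j) =
        (1/(nT:ℝ)) * ∑ j : Fin nT, (if hhat (ω.2 j) ≠ h' (ω.2 j) then (1:ℝ) else 0) := by
      congr 1
      exact Finset.sum_congr rfl fun j _ => hT_eq j
    have hWω : W ω = (1/(nS:ℝ)) * ∑ i, fS (ω.1 i) + (1/(nT:ℝ)) * ∑ j, fT (ω.2 j) := rfl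
    rw [hWω] at hωF'
    rw [hsum2] at hωF'
    linarith [hr_le_c, hsum1]
  -- conclude
  rw [measure_eq_iInf]
  refine le_iInf fun A => le_iInf fun hsubA => le_iInf fun hAm => ?_
  have hFA : P (F \ A) = 0 := by
    apply hZnull _ (hFm.diff hAm)
    intro ω hω
    by_contra hz
    exact hω.2 (hsubA (hincl ω hω.1 hz))
  calc ENNReal.ofReal (1 - δ) ≤ P F := hPF
  _ ≤ P (F ∩ A) + P (F \ A) := measure_le_inter_add_diff _ _ _
  _ = P (F ∩ A) := by rw [hFA, add_zero]
  _ ≤ P A := measure_mono Set.inter_subset_right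
end

section
/- Let X be a measurable space and Y a nonempty finite type. Let S and T be probability measures on X × Y with marginals S_X, T_X on X, and let ĥ, h' : X → Y be measurable classifiers. Assume the paper's assumption fails: T{(x,y) | ĥ x ≠ y} − S{(x,y) | ĥ x ≠ y} > T_X{x | ĥ x ≠ h' x} − S_X{x | ĥ x ≠ h' x}. Fix integers n_S, n_T ≥ 1 and δ ∈ (0,1), and let P be the product measure S^{⊗n_S} ⊗ T^{⊗n_T} on (X × Y)^{n_S} × (X × Y)^{n_T}, with coordinates ((x_i, y_i))_{i=1}^{n_S} and ((x'_j, y'_j))_{j=1}^{n_T}. Then with P-probability at least 1 − δ: (1/n_T)·Σ_{j=1}^{n_T} 1{ĥ x'_j ≠ y'_j} > (1/n_S)·Σ_{i=1}^{n_S} 1{ĥ x_i ≠ y_i} + (1/n_T)·Σ_{j=1}^{n_T} 1{ĥ x'_j ≠ h' x'_j} − (1/n_S)·Σ_{i=1}^{n_S} 1{ĥ x_i ≠ h' x_i} − sqrt(2·(n_S + n_T)·log(1/δ) / (n_S·n_T)). -/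
open MeasureTheory Finset Real

section ConverseAux


lemma phi_pos (p q u : ℝ) (hp : 0 ≤ p) (hq : 0 ≤ q) (hpq : p + q = 1) :
    0 < p * exp u + q * exp (-u) := by
  rcases eq_or_lt_of_le hp with h | h
  · have hq1 : q = 1 := by linarith
    simp [← h, hq1, exp_pos]
  · exact add_pos_of_pos_of_nonneg (mul_pos h (exp_pos u))
      (mul_nonneg hq (exp_pos (-u)).le)

lemma logMgfBound (p q : ℝ) (hp : 0 ≤ p) (hq : 0 ≤ q) (hpq : p + q = 1) (u : ℝ) :
    p * exp u + q * exp (-u) ≤ exp ((p - q) * u + u ^ 2 / 2) := by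
  set φ : ℝ → ℝ := fun v => p * exp v + q * exp (-v) with hφdef
  set ψ : ℝ → ℝ := fun v => p * exp v - q * exp (-v) with hψdef
  have hφpos : ∀ v, 0 < φ v := fun v => phi_pos p q v hp hq hpq
  have hexp2 : ∀ v : ℝ, HasDerivAt (fun v : ℝ => exp (-v)) (-exp (-v)) v := by
    intro v
    have h2 : HasDerivAt (fun v : ℝ => exp (-v)) (exp (-v) * (-1)) v :=
      (Real.hasDerivAt_exp (-v)).comp v ((hasDerivAt_id v).neg)
    simpa [mul_comm] using h2
  have hφ : ∀ v, HasDerivAt φ (ψ v) v := by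
    intro v
    have := ((Real.hasDerivAt_exp v).const_mul p).add ((hexp2 v).const_mul q)
    refine HasDerivAt.congr_deriv this ?_
    simp only [hψdef]
    ring
  have hψ : ∀ v, HasDerivAt ψ (φ v) v := by
    intro v
    have := ((Real.hasDerivAt_exp v).const_mul p).sub ((hexp2 v).const_mul q)
    refine HasDerivAt.congr_deriv this ?_
    simp only [hφdef]
    ring
  set g' : ℝ → ℝ := fun v => ψ v / φ v - (p - q) - v with hg'def
  set g : ℝ → ℝ := fun v => Real.log (φ v) - (p - q) * v - v ^ 2 / 2 with hgdef
  have hg : ∀ v, HasDerivAt g (g' v) v := by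
    intro v
    have h1 : HasDerivAt (fun v => Real.log (φ v)) (ψ v / φ v) v :=
      (hφ v).log (hφpos v).ne'
    have h2 : HasDerivAt (fun v : ℝ => (p - q) * v) (p - q) v := by
      simpa using (hasDerivAt_id v).const_mul (p - q)
    have h3 : HasDerivAt (fun v : ℝ => v ^ 2 / 2) v v := by
      have := (hasDerivAt_pow 2 v).div_const 2
      refine HasDerivAt.congr_deriv this ?_
      push_cast; ring
    exact (h1.sub h2).sub h3
  have hg'deriv : ∀ v, HasDerivAt g'
      ((φ v * φ v - ψ v * ψ v) / (φ v) ^ 2 - 1) v := by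
    intro v
    have h1 : HasDerivAt (fun v => ψ v / φ v)
        ((φ v * φ v - ψ v * ψ v) / (φ v) ^ 2) v := (hψ v).div (hφ v) (hφpos v).ne'
    have h2 : HasDerivAt (fun v : ℝ => v) 1 v := hasDerivAt_id v
    have := (h1.sub_const (p - q)).sub h2
    exact this
  have hg'nonpos : ∀ v, (φ v * φ v - ψ v * ψ v) / (φ v) ^ 2 - 1 ≤ 0 := by
    intro v
    have h2 : (φ v * φ v - ψ v * ψ v) / (φ v) ^ 2 ≤ 1 := by
      rw [div_le_one (pow_pos (hφpos v) 2)]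
      nlinarith [sq_nonneg (ψ v)]
    linarith
  have hg'anti : Antitone g' := by
    apply antitone_of_deriv_nonpos
    · intro v; exact (hg'deriv v).differentiableAt
    · intro v; rw [(hg'deriv v).deriv]; exact hg'nonpos v
  have hg'0 : g' 0 = 0 := by
    simp only [hg'def, hψdef, hφdef]
    norm_num [hpq]
  have hg0 : g 0 = 0 := by
    have : φ 0 = 1 := by simp [hφdef, hpq]
    simp [hgdef, this]
  have hgle : ∀ v, g v ≤ 0 := by
    intro v
    rcases le_total 0 v with h | h
    · have hA : AntitoneOn g (Set.Ici 0) := by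
        apply antitoneOn_of_deriv_nonpos (convex_Ici 0)
        · exact fun x _ => ((hg x).differentiableAt.continuousAt).continuousWithinAt
        · exact fun x _ => ((hg x).differentiableAt).differentiableWithinAt
        · intro x hx
          rw [interior_Ici] at hx
          rw [(hg x).deriv]
          have : g' x ≤ g' 0 := hg'anti (le_of_lt hx)
          linarith [hg'0 ▸ this]
      have := hA (Set.self_mem_Ici) (Set.mem_Ici.2 h) h
      linarith [hg0 ▸ this]
    · have hA : MonotoneOn g (Set.Iic 0) := by
        apply monotoneOn_of_deriv_nonneg (convex_Iic 0)
        · exact fun x _ => ((hg x).differentiableAt.continuousAt).continuousWithinAt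
        · exact fun x _ => ((hg x).differentiableAt).differentiableWithinAt
        · intro x hx
          rw [interior_Iic] at hx
          rw [(hg x).deriv]
          have : g' 0 ≤ g' x := hg'anti (le_of_lt hx)
          linarith [hg'0 ▸ this]
      have := hA (Set.mem_Iic.2 h) (Set.self_mem_Iic) h
      linarith [hg0 ▸ this]
  have hfinal := hgle u
  have : Real.log (φ u) ≤ (p - q) * u + u ^ 2 / 2 := by
    simp only [hgdef] at hfinal; linarith
  calc φ u = exp (Real.log (φ u)) := (Real.exp_log (hφpos u)).symm
    _ ≤ exp ((p - q) * u + u ^ 2 / 2) := exp_le_exp.2 this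

lemma hoeffding_int {Z : Type*} [MeasurableSpace Z] (μ : Measure Z)
    [IsProbabilityMeasure μ] (f : Z → ℝ) (hf : Measurable f)
    (hb : ∀ z, |f z| ≤ 1) (u : ℝ) :
    ∫ z, exp (u * f z) ∂μ ≤ exp (u * (∫ z, f z ∂μ) + u ^ 2 / 2) := by
  have hfi : Integrable f μ := by
    refine Integrable.mono' (integrable_const 1) hf.aestronglyMeasurable ?_
    exact Filter.Eventually.of_forall fun z => by simpa using hb z
  set m := ∫ z, f z ∂μ with hm
  have hmb : |m| ≤ 1 := by
    have h1 : |m| ≤ ∫ z, |f z| ∂μ := by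
      simpa [Real.norm_eq_abs] using norm_integral_le_integral_norm (μ := μ) f
    have h2 : ∫ z, |f z| ∂μ ≤ ∫ _ : Z, (1 : ℝ) ∂μ :=
      integral_mono hfi.abs (integrable_const 1) hb
    have h3 : ∫ _ : Z, (1 : ℝ) ∂μ = 1 := by simp
    linarith
  have hei : Integrable (fun z => exp (u * f z)) μ := by
    refine Integrable.mono' (integrable_const (exp |u|)) ?_ ?_
    · exact (hf.const_mul u).exp.aestronglyMeasurable
    · refine Filter.Eventually.of_forall fun z => ?_
      rw [Real.norm_eq_abs, abs_of_pos (exp_pos _), exp_le_exp]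
      calc u * f z ≤ |u * f z| := le_abs_self _
        _ = |u| * |f z| := abs_mul u (f z)
        _ ≤ |u| * 1 := by
            exact mul_le_mul_of_nonneg_left (hb z) (abs_nonneg u)
        _ = |u| := mul_one _
  have hpt : ∀ z, exp (u * f z) ≤
      (exp u - exp (-u)) / 2 * f z + (exp u + exp (-u)) / 2 := by
    intro z
    have ha : (0:ℝ) ≤ (1 - f z) / 2 := by
      have := (abs_le.1 (hb z)).2; linarith
    have hb' : (0:ℝ) ≤ (1 + f z) / 2 := by
      have := (abs_le.1 (hb z)).1; linarith
    have hab : (1 - f z) / 2 + (1 + f z) / 2 = 1 := by ring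
    have := convexOn_exp.2 (Set.mem_univ (-u)) (Set.mem_univ u) ha hb' hab
    simp only [smul_eq_mul] at this
    have harg : (1 - f z) / 2 * -u + (1 + f z) / 2 * u = u * f z := by ring
    rw [harg] at this
    calc exp (u * f z) ≤ (1 - f z) / 2 * exp (-u) + (1 + f z) / 2 * exp u := this
      _ = (exp u - exp (-u)) / 2 * f z + (exp u + exp (-u)) / 2 := by ring
  have hint : ∫ z, exp (u * f z) ∂μ ≤
      (exp u - exp (-u)) / 2 * m + (exp u + exp (-u)) / 2 := by
    have h2 : Integrable (fun z => (exp u - exp (-u)) / 2 * f z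
        + (exp u + exp (-u)) / 2) μ :=
      (hfi.const_mul _).add (integrable_const _)
    calc ∫ z, exp (u * f z) ∂μ
        ≤ ∫ z, ((exp u - exp (-u)) / 2 * f z + (exp u + exp (-u)) / 2) ∂μ :=
          integral_mono hei h2 hpt
      _ = (exp u - exp (-u)) / 2 * m + (exp u + exp (-u)) / 2 := by
          rw [integral_add (hfi.const_mul _) (integrable_const _),
            integral_const_mul, integral_const]
          simp [hm]
  refine hint.trans ?_
  have key := logMgfBound ((1 + m) / 2) ((1 - m) / 2)
    (by have := (abs_le.1 hmb).1; linarith)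
    (by have := (abs_le.1 hmb).2; linarith) (by ring) u
  have hpq : (1 + m) / 2 - (1 - m) / 2 = m := by ring
  rw [hpq] at key
  calc (exp u - exp (-u)) / 2 * m + (exp u + exp (-u)) / 2
      = (1 + m) / 2 * exp u + (1 - m) / 2 * exp (-u) := by ring
    _ ≤ exp (m * u + u ^ 2 / 2) := key
    _ = exp (u * m + u ^ 2 / 2) := by rw [mul_comm m u]

section InnerNull

variable {Z : Type*} [MeasurableSpace Z]

/-- Every measurable subset of `D` is `μ`-null. -/
def InnerNull (μ : Measure Z) (D : Set Z) : Prop :=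
  ∀ C : Set Z, MeasurableSet C → C ⊆ D → μ C = 0

lemma innerNull_toMeasurable_diff (μ : Measure Z) [IsFiniteMeasure μ] (B : Set Z) :
    InnerNull μ (toMeasurable μ B \ B) := by
  intro C hCm hCsub
  have hBsub : B ⊆ toMeasurable μ B \ C := fun z hz =>
    ⟨subset_toMeasurable μ B hz, fun hzC => (hCsub hzC).2 hz⟩
  have hCsub' : C ⊆ toMeasurable μ B := fun z hz => (hCsub hz).1
  have hunion : (toMeasurable μ B \ C) ∪ C = toMeasurable μ B := by
    rw [Set.diff_union_self, Set.union_eq_self_of_subset_right hCsub']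
  have hdisj : Disjoint (toMeasurable μ B \ C) C := Set.disjoint_sdiff_left
  have hadd : μ (toMeasurable μ B \ C) + μ C = μ (toMeasurable μ B) := by
    rw [← measure_union hdisj hCm, hunion]
  have hge : μ (toMeasurable μ B) ≤ μ (toMeasurable μ B \ C) := by
    rw [measure_toMeasurable B]
    exact measure_mono hBsub
  have hfin : μ (toMeasurable μ B \ C) ≠ ⊤ := measure_ne_top μ _
  have : μ (toMeasurable μ B \ C) + μ C ≤ μ (toMeasurable μ B \ C) + 0 := by
    rw [add_zero, hadd]; exact hge
  have := (ENNReal.add_le_add_iff_left hfin).1 this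
  exact le_antisymm this zero_le

lemma innerNull_fst_preimage {X Y : Type*} [MeasurableSpace X] [MeasurableSpace Y]
    [Fintype Y] (S : Measure (X × Y)) [IsProbabilityMeasure S] (A : Set X) :
    InnerNull S (Prod.fst ⁻¹' (toMeasurable (S.map Prod.fst) A) \ Prod.fst ⁻¹' A) := by
  intro C hCm hCsub
  set SX := S.map Prod.fst with hSX
  haveI : IsProbabilityMeasure SX := Measure.isProbabilityMeasure_map
    measurable_fst.aemeasurable
  have hsec : ∀ y : Y, MeasurableSet ((fun x => (x, y)) ⁻¹' C) := fun y =>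
    hCm.preimage (measurable_id.prodMk measurable_const)
  have hsecnull : ∀ y : Y, SX ((fun x => (x, y)) ⁻¹' C) = 0 := by
    intro y
    refine innerNull_toMeasurable_diff SX A _ (hsec y) ?_
    intro x hx
    have := hCsub hx
    exact ⟨this.1, this.2⟩
  set U : Set X := ⋃ y : Y, (fun x => (x, y)) ⁻¹' C with hU
  have hUm : MeasurableSet U := MeasurableSet.iUnion fun y => hsec y
  have hUnull : SX U = 0 := measure_iUnion_null fun y => hsecnull y
  have hCU : C ⊆ Prod.fst ⁻¹' U := by
    rintro ⟨x, y⟩ hxy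
    exact Set.mem_preimage.2 (Set.mem_iUnion.2 ⟨y, hxy⟩)
  have hle : S C ≤ 0 := calc
    S C ≤ S (Prod.fst ⁻¹' U) := measure_mono hCU
    _ = SX U := (Measure.map_apply measurable_fst hUm).symm
    _ = 0 := hUnull
  exact le_antisymm hle zero_le

lemma prod_innerNull {Zα Zβ : Type*} [MeasurableSpace Zα] [MeasurableSpace Zβ]
    (μ : Measure Zα) (ν : Measure Zβ) [SigmaFinite μ] [SigmaFinite ν]
    {D₁ : Set Zα} {D₂ : Set Zβ} (h₁ : InnerNull μ D₁) (h₂ : InnerNull ν D₂)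
    (R : Set (Zα × Zβ)) (hR : MeasurableSet R)
    (hsub : R ⊆ (D₁ ×ˢ (Set.univ : Set Zβ)) ∪ ((Set.univ : Set Zα) ×ˢ D₂)) :
    (μ.prod ν) R = 0 := by
  rw [Measure.prod_apply hR]
  have hmeas : Measurable fun x => ν (Prod.mk x ⁻¹' R) :=
    measurable_measure_prodMk_left hR
  set G := {x | ν (Prod.mk x ⁻¹' R) ≠ 0} with hG
  have hGm : MeasurableSet G := by
    have : G = (fun x => ν (Prod.mk x ⁻¹' R)) ⁻¹' ({0}ᶜ) := rfl
    rw [this]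
    exact hmeas (measurableSet_singleton 0).compl
  have hGsub : G ⊆ D₁ := by
    intro x hx
    by_contra hxD
    apply hx
    refine h₂ (Prod.mk x ⁻¹' R) (measurable_prodMk_left hR) ?_
    intro y hy
    rcases hsub hy with h | h
    · exact absurd h.1 hxD
    · exact h.2
  have hGnull : μ G = 0 := h₁ G hGm hGsub
  have : ∀ᵐ x ∂μ, ν (Prod.mk x ⁻¹' R) = 0 := by
    filter_upwards [measure_eq_zero_iff_ae_notMem.1 hGnull] with x hx
    simpa [hG] using hx
  rw [lintegral_congr_ae this]
  simp

lemma pi_innerNull {Z : Type*} [MeasurableSpace Z] (μ : Measure Z)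
    [IsProbabilityMeasure μ] {D : Set Z} (hD : InnerNull μ D) :
    ∀ (n : ℕ) (R : Set (Fin n → Z)), MeasurableSet R →
      (R ⊆ {v | ∃ i, v i ∈ D}) → Measure.pi (fun _ => μ) R = 0 := by
  intro n
  induction n with
  | zero =>
    intro R _ hsub
    have : R = ∅ := by
      ext v
      simp only [Set.mem_empty_iff_false, iff_false]
      intro hv
      rcases hsub hv with ⟨i, _⟩
      exact i.elim0
    simp [this]
  | succ n ih =>
    intro R hR hsub
    set e := MeasurableEquiv.piFinSuccAbove (fun _ : Fin (n + 1) => Z) 0 with he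
    have hmp := measurePreserving_piFinSuccAbove (fun _ : Fin (n + 1) => μ) 0
    set R' : Set (Z × (Fin n → Z)) := e.symm ⁻¹' R with hR'
    have hR'm : MeasurableSet R' := e.symm.measurable hR
    have hpre : e ⁻¹' R' = R := by
      ext v; simp [hR']
    have htrans : Measure.pi (fun _ : Fin (n + 1) => μ) R
        = (μ.prod (Measure.pi fun _ : Fin n => μ)) R' := by
      rw [← hpre]
      exact hmp.measure_preimage hR'm.nullMeasurableSet
    rw [htrans]
    have hIH : InnerNull (Measure.pi fun _ : Fin n => μ)
        {w : Fin n → Z | ∃ j, w j ∈ D} := fun C hC hCsub => ih C hC hCsub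
    refine prod_innerNull μ (Measure.pi fun _ : Fin n => μ) hD hIH R' hR'm ?_
    rintro ⟨z, w⟩ hzw
    have hmem : e.symm (z, w) ∈ R := hzw
    rcases hsub hmem with ⟨i, hi⟩
    have hsymm : e.symm (z, w) = Fin.insertNth 0 z w := rfl
    rw [hsymm] at hi
    rcases Fin.eq_zero_or_eq_succ i with h0 | ⟨j, hj⟩
    · left
      subst h0
      refine ⟨?_, Set.mem_univ _⟩
      simpa using hi
    · right
      refine ⟨Set.mem_univ _, ⟨j, ?_⟩⟩
      subst hj
      simpa [Fin.insertNth_zero] using hi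

end InnerNull

lemma integral_pi_pow {Z : Type*} [MeasurableSpace Z] (μ : Measure Z)
    [IsProbabilityMeasure μ] (n : ℕ) (f : Z → ℝ) :
    ∫ v : Fin n → Z, ∏ i, f (v i) ∂(Measure.pi fun _ => μ)
      = (∫ z, f z ∂μ) ^ n := by
  letI : MeasureSpace Z := ⟨μ⟩
  haveI : SigmaFinite (volume : Measure Z) := by
    show SigmaFinite μ; infer_instance
  simpa using integral_fintype_prod_eq_pow (ι := Fin n) (μ := μ) f

lemma chernoff_two_sample {ZS ZT : Type*} [MeasurableSpace ZS] [MeasurableSpace ZT]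
    (S : Measure ZS) (T : Measure ZT)
    [IsProbabilityMeasure S] [IsProbabilityMeasure T]
    (fS : ZS → ℝ) (fT : ZT → ℝ) (hfS : Measurable fS) (hfT : Measurable fT)
    (hbS : ∀ z, |fS z| ≤ 1) (hbT : ∀ z, |fT z| ≤ 1)
    (hΔ : 0 ≤ (∫ z, fS z ∂S) + ∫ z, fT z ∂T)
    (nS nT : ℕ) (hnS : 1 ≤ nS) (hnT : 1 ≤ nT)
    (δ : ℝ) (hδ0 : 0 < δ) (hδ1 : δ < 1) :
    ((Measure.pi fun _ : Fin nS => S).prod (Measure.pi fun _ : Fin nT => T))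
      {ω : (Fin nS → ZS) × (Fin nT → ZT) |
        (1 / (nS : ℝ)) * ∑ i, fS (ω.1 i) + (1 / (nT : ℝ)) * ∑ j, fT (ω.2 j) ≤
          - Real.sqrt (2 * ((nS : ℝ) + (nT : ℝ)) * Real.log (1 / δ)
            / ((nS : ℝ) * (nT : ℝ)))} ≤ ENNReal.ofReal δ := by
  have hNS : (0:ℝ) < nS := by exact_mod_cast hnS
  have hNT : (0:ℝ) < nT := by exact_mod_cast hnT
  set NS := (nS : ℝ)
  set NT := (nT : ℝ)
  have hL : 0 < Real.log (1 / δ) := by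
    apply Real.log_pos
    rw [lt_div_iff₀ hδ0]; linarith
  set L := Real.log (1 / δ) with hLdef
  set c := 2 * (NS + NT) * L / (NS * NT) with hcdef
  have hc : 0 < c := by positivity
  set a := Real.sqrt c with hadef
  have ha : 0 < a := Real.sqrt_pos.2 hc
  have ha2 : a ^ 2 = c := Real.sq_sqrt hc.le
  set t := a * (NS * NT) / (NS + NT) with htdef
  have ht : 0 < t := by positivity
  set P := (Measure.pi fun _ : Fin nS => S).prod (Measure.pi fun _ : Fin nT => T)
    with hPdef
  haveI : IsProbabilityMeasure P := by
    rw [hPdef]; infer_instance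
  set W : (Fin nS → ZS) × (Fin nT → ZT) → ℝ :=
    fun ω => (1 / NS) * ∑ i, fS (ω.1 i) + (1 / NT) * ∑ j, fT (ω.2 j) with hWdef
  have hW : Measurable W := by
    apply Measurable.add
    · exact (Finset.measurable_sum univ fun i _ =>
        hfS.comp ((measurable_pi_apply i).comp measurable_fst)).const_mul _
    · exact (Finset.measurable_sum univ fun j _ =>
        hfT.comp ((measurable_pi_apply j).comp measurable_snd)).const_mul _
  have hWb : ∀ ω, |W ω| ≤ 2 := by
    intro ω
    have h1 : |(1 / NS) * ∑ i, fS (ω.1 i)| ≤ 1 := by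
      rw [abs_mul, abs_of_pos (by positivity : (0:ℝ) < 1 / NS)]
      have : |∑ i, fS (ω.1 i)| ≤ NS := by
        calc |∑ i, fS (ω.1 i)| ≤ ∑ i, |fS (ω.1 i)| := Finset.abs_sum_le_sum_abs _ _
          _ ≤ ∑ _i : Fin nS, (1:ℝ) := Finset.sum_le_sum fun i _ => hbS _
          _ = NS := by simp; rfl
      calc (1 / NS) * |∑ i, fS (ω.1 i)| ≤ (1 / NS) * NS := by
            exact mul_le_mul_of_nonneg_left this (by positivity)
        _ = 1 := by field_simp
    have h2 : |(1 / NT) * ∑ j, fT (ω.2 j)| ≤ 1 := by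
      rw [abs_mul, abs_of_pos (by positivity : (0:ℝ) < 1 / NT)]
      have : |∑ j, fT (ω.2 j)| ≤ NT := by
        calc |∑ j, fT (ω.2 j)| ≤ ∑ j, |fT (ω.2 j)| := Finset.abs_sum_le_sum_abs _ _
          _ ≤ ∑ _j : Fin nT, (1:ℝ) := Finset.sum_le_sum fun j _ => hbT _
          _ = NT := by simp; rfl
      calc (1 / NT) * |∑ j, fT (ω.2 j)| ≤ (1 / NT) * NT := by
            exact mul_le_mul_of_nonneg_left this (by positivity)
        _ = 1 := by field_simp
    calc |W ω| ≤ |(1 / NS) * ∑ i, fS (ω.1 i)| + |(1 / NT) * ∑ j, fT (ω.2 j)| :=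
          abs_add_le _ _
      _ ≤ 2 := by linarith
  have h_int : Integrable (fun ω => exp ((-t) * W ω)) P := by
    refine Integrable.mono' (integrable_const (exp (t * 2))) ?_ ?_
    · exact (hW.const_mul (-t)).exp.aestronglyMeasurable
    · refine Filter.Eventually.of_forall fun ω => ?_
      rw [Real.norm_eq_abs, abs_of_pos (exp_pos _), exp_le_exp]
      have := (abs_le.1 (hWb ω)).1
      nlinarith
  have hchern := ProbabilityTheory.measure_le_le_exp_mul_mgf (μ := P) (X := W)
    (-a) (neg_nonpos_of_nonneg ht.le) h_int
  -- compute the mgf bound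
  set u1 := -t / NS with hu1def
  set u2 := -t / NT with hu2def
  have hfac : (fun ω => exp ((-t) * W ω)) =
      fun ω : (Fin nS → ZS) × (Fin nT → ZT) =>
        (∏ i, exp (u1 * fS (ω.1 i))) * (∏ j, exp (u2 * fT (ω.2 j))) := by
    funext ω
    rw [← Real.exp_sum, ← Real.exp_sum, ← Real.exp_add]
    congr 1
    have e1 : ∑ i, u1 * fS (ω.1 i) = u1 * ∑ i, fS (ω.1 i) :=
      (Finset.mul_sum _ _ _).symm
    have e2 : ∑ j, u2 * fT (ω.2 j) = u2 * ∑ j, fT (ω.2 j) :=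
      (Finset.mul_sum _ _ _).symm
    rw [e1, e2, hWdef]
    simp only [hu1def, hu2def]
    field_simp
    ring
  have hmgf : ProbabilityTheory.mgf W P (-t) =
      (∫ z, exp (u1 * fS z) ∂S) ^ nS * (∫ z, exp (u2 * fT z) ∂T) ^ nT := by
    unfold ProbabilityTheory.mgf
    rw [show (fun ω => exp ((-t) * W ω)) = _ from hfac]
    rw [hPdef]
    rw [integral_prod_mul (f := fun v : Fin nS → ZS => ∏ i, exp (u1 * fS (v i)))
      (g := fun w : Fin nT → ZT => ∏ j, exp (u2 * fT (w j)))]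
    rw [integral_pi_pow S nS (fun z => exp (u1 * fS z)),
      integral_pi_pow T nT (fun z => exp (u2 * fT z))]
  set mS := ∫ z, fS z ∂S with hmSdef
  set mT := ∫ z, fT z ∂T with hmTdef
  have hIS : ∫ z, exp (u1 * fS z) ∂S ≤ exp (u1 * mS + u1 ^ 2 / 2) :=
    hoeffding_int S fS hfS hbS u1
  have hIT : ∫ z, exp (u2 * fT z) ∂T ≤ exp (u2 * mT + u2 ^ 2 / 2) :=
    hoeffding_int T fT hfT hbT u2
  have hISnn : 0 ≤ ∫ z, exp (u1 * fS z) ∂S :=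
    integral_nonneg fun z => (exp_pos _).le
  have hITnn : 0 ≤ ∫ z, exp (u2 * fT z) ∂T :=
    integral_nonneg fun z => (exp_pos _).le
  have hbound : (P {ω | W ω ≤ -a}).toReal ≤
      exp (-(-t) * (-a)) * (exp (u1 * mS + u1 ^ 2 / 2) ^ nS
        * exp (u2 * mT + u2 ^ 2 / 2) ^ nT) := by
    refine hchern.trans ?_
    rw [hmgf]
    apply mul_le_mul_of_nonneg_left _ (exp_pos _).le
    exact mul_le_mul (pow_le_pow_left₀ hISnn hIS nS) (pow_le_pow_left₀ hITnn hIT nT)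
      (pow_nonneg hITnn nT) (pow_nonneg (exp_pos _).le nS)
  have hexp_combine : exp (-(-t) * (-a)) * (exp (u1 * mS + u1 ^ 2 / 2) ^ nS
      * exp (u2 * mT + u2 ^ 2 / 2) ^ nT)
      = exp (-(t * a) + (NS * (u1 * mS + u1 ^ 2 / 2)
          + NT * (u2 * mT + u2 ^ 2 / 2))) := by
    rw [← Real.exp_nat_mul, ← Real.exp_nat_mul, ← Real.exp_add, ← Real.exp_add]
    congr 1
    ring
  have hexponent : -(t * a) + (NS * (u1 * mS + u1 ^ 2 / 2)
      + NT * (u2 * mT + u2 ^ 2 / 2)) ≤ Real.log δ := by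
    have he1 : NS * (u1 * mS + u1 ^ 2 / 2) = -t * mS + t ^ 2 / (2 * NS) := by
      rw [hu1def]; field_simp
    have he2 : NT * (u2 * mT + u2 ^ 2 / 2) = -t * mT + t ^ 2 / (2 * NT) := by
      rw [hu2def]; field_simp
    rw [he1, he2]
    have hdrop : -t * mS + -t * mT ≤ 0 := by
      have : -t * (mS + mT) ≤ 0 :=
        mul_nonpos_of_nonpos_of_nonneg (by linarith) hΔ
      linarith [this]
    have hkey : -(t * a) + (t ^ 2 / (2 * NS) + t ^ 2 / (2 * NT)) = -L := by
      set σ := (NS + NT) / (NS * NT) with hσdef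
      have hσ : 0 < σ := by positivity
      have h1 : t = a / σ := by
        rw [htdef, hσdef, div_div_eq_mul_div]
      have h2 : t ^ 2 / (2 * NS) + t ^ 2 / (2 * NT) = t ^ 2 / 2 * σ := by
        rw [hσdef]; first | (field_simp; ring) | field_simp
      have h3 : c = 2 * σ * L := by
        rw [hcdef, hσdef]; first | (field_simp; ring) | field_simp
      rw [h2, h1]
      have h4 : -(a / σ * a) + (a / σ) ^ 2 / 2 * σ = -(a ^ 2) / (2 * σ) := by
        first
        | (field_simp; ring)
        | field_simp
      rw [h4, ha2, h3]
      first
      | (field_simp; ring)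
      | field_simp
    have hlog : -L = Real.log δ := by
      rw [hLdef, one_div, Real.log_inv]; ring
    linarith [hdrop, hkey.le, hkey.ge]
  have hfinal : (P {ω | W ω ≤ -a}).toReal ≤ δ := by
    calc (P {ω | W ω ≤ -a}).toReal
        ≤ exp (-(-t) * (-a)) * (exp (u1 * mS + u1 ^ 2 / 2) ^ nS
          * exp (u2 * mT + u2 ^ 2 / 2) ^ nT) := hbound
      _ = exp (-(t * a) + (NS * (u1 * mS + u1 ^ 2 / 2)
          + NT * (u2 * mT + u2 ^ 2 / 2))) := hexp_combine
      _ ≤ exp (Real.log δ) := exp_le_exp.2 hexponent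
      _ = δ := Real.exp_log hδ0
  have : P {ω | W ω ≤ -a} ≤ ENNReal.ofReal δ :=
    (ENNReal.le_ofReal_iff_toReal_le (measure_ne_top _ _) hδ0.le).2 hfinal
  exact this
end ConverseAux

/-- Corollary C.1: if Assumption 2 fails, then with probability ≥ 1 − δ the
empirical target error exceeds the empirical bound minus the concentration
term. -/
theorem converse_bound
    {X : Type*} [MeasurableSpace X]
    {Y : Type*} [Fintype Y] [Nonempty Y] [DecidableEq Y] [MeasurableSpace Y]
    (S T : Measure (X × Y)) [IsProbabilityMeasure S] [IsProbabilityMeasure T]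
    (hhat h' : X → Y) (hhhat : Measurable hhat) (hh' : Measurable h')
    (hfail :
      ((T.map Prod.fst) {x | hhat x ≠ h' x}).toReal
          - ((S.map Prod.fst) {x | hhat x ≠ h' x}).toReal <
        (T {p : X × Y | hhat p.1 ≠ p.2}).toReal - (S {p : X × Y | hhat p.1 ≠ p.2}).toReal)
    (nS nT : ℕ) (hnS : 1 ≤ nS) (hnT : 1 ≤ nT)
    (δ : ℝ) (hδ0 : 0 < δ) (hδ1 : δ < 1) :
    ENNReal.ofReal (1 - δ) ≤
      ((Measure.pi fun _ : Fin nS => S).prod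
        (Measure.pi fun _ : Fin nT => T))
        {ω : (Fin nS → X × Y) × (Fin nT → X × Y) |
          (1 / (nT : ℝ)) * ∑ j : Fin nT, (if hhat (ω.2 j).1 ≠ (ω.2 j).2 then (1 : ℝ) else 0) >
            (1 / (nS : ℝ)) * ∑ i : Fin nS, (if hhat (ω.1 i).1 ≠ (ω.1 i).2 then (1 : ℝ) else 0)
            + (1 / (nT : ℝ)) * ∑ j : Fin nT, (if hhat (ω.2 j).1 ≠ h' (ω.2 j).1 then (1 : ℝ) else 0)
            - (1 / (nS : ℝ)) * ∑ i : Fin nS, (if hhat (ω.1 i).1 ≠ h' (ω.1 i).1 then (1 : ℝ) else 0)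
            - Real.sqrt (2 * ((nS : ℝ) + (nT : ℝ)) * Real.log (1 / δ)
                / ((nS : ℝ) * (nT : ℝ)))} := by
  classical
  set Z := X × Y
  set A : Set X := {x | hhat x ≠ h' x} with hAdef
  set B : Set Z := {p : Z | hhat p.1 ≠ p.2} with hBdef
  set SX := S.map (Prod.fst : Z → X) with hSXdef
  set TX := T.map (Prod.fst : Z → X) with hTXdef
  haveI : IsProbabilityMeasure SX := Measure.isProbabilityMeasure_map
    measurable_fst.aemeasurable
  haveI : IsProbabilityMeasure TX := Measure.isProbabilityMeasure_map
    measurable_fst.aemeasurable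
  set As : Set Z := Prod.fst ⁻¹' (toMeasurable SX A) with hAsdef
  set At : Set Z := Prod.fst ⁻¹' (toMeasurable TX A) with hAtdef
  set Bs : Set Z := toMeasurable S B with hBsdef
  set Bt : Set Z := toMeasurable T B with hBtdef
  have hAsm : MeasurableSet As := (measurableSet_toMeasurable _ _).preimage measurable_fst
  have hAtm : MeasurableSet At := (measurableSet_toMeasurable _ _).preimage measurable_fst
  have hBsm : MeasurableSet Bs := measurableSet_toMeasurable _ _
  have hBtm : MeasurableSet Bt := measurableSet_toMeasurable _ _
  set fS : Z → ℝ := fun z => Set.indicator As (1 : Z → ℝ) z - Set.indicator Bs (1 : Z → ℝ) z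
    with hfSdef
  set fT : Z → ℝ := fun z => Set.indicator Bt (1 : Z → ℝ) z - Set.indicator At (1 : Z → ℝ) z
    with hfTdef
  have hfSm : Measurable fS :=
    (measurable_one.indicator hAsm).sub (measurable_one.indicator hBsm)
  have hfTm : Measurable fT :=
    (measurable_one.indicator hBtm).sub (measurable_one.indicator hAtm)
  have habs : ∀ (U V : Set Z) (z : Z),
      |Set.indicator U (1 : Z → ℝ) z - Set.indicator V (1 : Z → ℝ) z| ≤ 1 := by
    intro U V z
    by_cases h1 : z ∈ U <;> by_cases h2 : z ∈ V <;>
      simp [Set.indicator_of_mem, Set.indicator_of_notMem, h1, h2]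
  have hbS : ∀ z, |fS z| ≤ 1 := fun z => habs As Bs z
  have hbT : ∀ z, |fT z| ≤ 1 := fun z => habs Bt At z
  -- means
  have hintInd : ∀ (U : Set Z) (hU : MeasurableSet U) (μ : Measure Z)
      [IsProbabilityMeasure μ], ∫ z, Set.indicator U (1 : Z → ℝ) z ∂μ = (μ U).toReal := by
    intro U hU μ _
    exact integral_indicator_one hU
  have hmS : ∫ z, fS z ∂S = (SX A).toReal - (S B).toReal := by
    simp only [hfSdef]
    rw [integral_sub
      (show Integrable (As.indicator (1 : Z → ℝ)) S from (integrable_const 1).indicator hAsm)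
      (show Integrable (Bs.indicator (1 : Z → ℝ)) S from (integrable_const 1).indicator hBsm)]
    rw [hintInd As hAsm S, hintInd Bs hBsm S]
    congr 2
    · rw [hAsdef, ← Measure.map_apply measurable_fst (measurableSet_toMeasurable _ _),
        ← hSXdef, measure_toMeasurable]
    · rw [hBsdef, measure_toMeasurable]
  have hmT : ∫ z, fT z ∂T = (T B).toReal - (TX A).toReal := by
    simp only [hfTdef]
    rw [integral_sub
      (show Integrable (Bt.indicator (1 : Z → ℝ)) T from (integrable_const 1).indicator hBtm)
      (show Integrable (At.indicator (1 : Z → ℝ)) T from (integrable_const 1).indicator hAtm)]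
    rw [hintInd Bt hBtm T, hintInd At hAtm T]
    congr 2
    · rw [hBtdef, measure_toMeasurable]
    · rw [hAtdef, ← Measure.map_apply measurable_fst (measurableSet_toMeasurable _ _),
        ← hTXdef, measure_toMeasurable]
  have hΔ : 0 ≤ (∫ z, fS z ∂S) + ∫ z, fT z ∂T := by
    rw [hmS, hmT]
    linarith [hfail]
  -- the Chernoff bound
  have hG := chernoff_two_sample S T fS fT hfSm hfTm hbS hbT hΔ nS nT hnS hnT δ hδ0 hδ1
  set P := (Measure.pi fun _ : Fin nS => S).prod (Measure.pi fun _ : Fin nT => T) with hPdef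
  haveI : IsProbabilityMeasure P := by rw [hPdef]; infer_instance
  set a := Real.sqrt (2 * ((nS : ℝ) + (nT : ℝ)) * Real.log (1 / δ)
    / ((nS : ℝ) * (nT : ℝ))) with hadef
  set W : (Fin nS → Z) × (Fin nT → Z) → ℝ :=
    fun ω => (1 / (nS : ℝ)) * ∑ i, fS (ω.1 i) + (1 / (nT : ℝ)) * ∑ j, fT (ω.2 j) with hWdef
  have hWm : Measurable W := by
    apply Measurable.add
    · exact (Finset.measurable_sum univ fun i _ =>
        hfSm.comp ((measurable_pi_apply i).comp measurable_fst)).const_mul _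
    · exact (Finset.measurable_sum univ fun j _ =>
        hfTm.comp ((measurable_pi_apply j).comp measurable_snd)).const_mul _
  set G : Set ((Fin nS → Z) × (Fin nT → Z)) := {ω | W ω ≤ -a} with hGdef
  have hGm : MeasurableSet G := measurableSet_le hWm measurable_const
  have hGbound : P G ≤ ENNReal.ofReal δ := hG
  -- the event
  set Ev : Set ((Fin nS → Z) × (Fin nT → Z)) :=
    {ω : (Fin nS → Z) × (Fin nT → Z) |
      (1 / (nT : ℝ)) * ∑ j : Fin nT, (if hhat (ω.2 j).1 ≠ (ω.2 j).2 then (1 : ℝ) else 0) >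
        (1 / (nS : ℝ)) * ∑ i : Fin nS, (if hhat (ω.1 i).1 ≠ (ω.1 i).2 then (1 : ℝ) else 0)
        + (1 / (nT : ℝ)) * ∑ j : Fin nT, (if hhat (ω.2 j).1 ≠ h' (ω.2 j).1 then (1 : ℝ) else 0)
        - (1 / (nS : ℝ)) * ∑ i : Fin nS, (if hhat (ω.1 i).1 ≠ h' (ω.1 i).1 then (1 : ℝ) else 0)
        - a} with hEvdef
  set N := (toMeasurable P Ev)ᶜ with hNdef
  have hNm : MeasurableSet N := (measurableSet_toMeasurable P Ev).compl
  have hNsub : N ⊆ Evᶜ := Set.compl_subset_compl.2 (subset_toMeasurable P Ev)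
  -- the bad coordinate sets
  set DS : Set Z := As \ (Prod.fst ⁻¹' A) with hDSdef
  set DT : Set Z := Bt \ B with hDTdef
  have hDS : InnerNull S DS := innerNull_fst_preimage S A
  have hDT : InnerNull T DT := innerNull_toMeasurable_diff T B
  have hFS : InnerNull (Measure.pi fun _ : Fin nS => S) {v : Fin nS → Z | ∃ i, v i ∈ DS} :=
    fun C hC hsub => pi_innerNull S hDS nS C hC hsub
  have hFT : InnerNull (Measure.pi fun _ : Fin nT => T) {w : Fin nT → Z | ∃ j, w j ∈ DT} :=
    fun C hC hsub => pi_innerNull T hDT nT C hC hsub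
  -- N ∩ Gᶜ is null
  set R := N ∩ Gᶜ with hRdef
  have hRm : MeasurableSet R := hNm.inter hGm.compl
  have hRsub : R ⊆ ({v : Fin nS → Z | ∃ i, v i ∈ DS} ×ˢ (Set.univ : Set (Fin nT → Z)))
      ∪ ((Set.univ : Set (Fin nS → Z)) ×ˢ {w : Fin nT → Z | ∃ j, w j ∈ DT}) := by
    rintro ω ⟨hωN, hωGc⟩
    by_contra hno
    simp only [Set.mem_union, Set.mem_prod, Set.mem_univ, and_true, true_and,
      Set.mem_setOf_eq, not_or, not_exists] at hno
    obtain ⟨hnoS, hnoT⟩ := hno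
    -- pointwise comparisons
    have hS_pt : ∀ i, fS (ω.1 i) ≤
        (if hhat (ω.1 i).1 ≠ h' (ω.1 i).1 then (1:ℝ) else 0)
          - (if hhat (ω.1 i).1 ≠ (ω.1 i).2 then (1:ℝ) else 0) := by
      intro i
      have h1 : Set.indicator As (1 : Z → ℝ) (ω.1 i) ≤
          (if hhat (ω.1 i).1 ≠ h' (ω.1 i).1 then (1:ℝ) else 0) := by
        by_cases hz : ω.1 i ∈ As
        · have hzA : ω.1 i ∈ Prod.fst ⁻¹' A := by
            by_contra hzA
            exact hnoS i ⟨hz, hzA⟩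
          have : hhat (ω.1 i).1 ≠ h' (ω.1 i).1 := hzA
          rw [Set.indicator_of_mem hz, if_pos this]
          simp
        · rw [Set.indicator_of_notMem hz]
          split <;> norm_num
      have h2 : (if hhat (ω.1 i).1 ≠ (ω.1 i).2 then (1:ℝ) else 0) ≤
          Set.indicator Bs (1 : Z → ℝ) (ω.1 i) := by
        by_cases hz : hhat (ω.1 i).1 ≠ (ω.1 i).2
        · have : ω.1 i ∈ Bs := subset_toMeasurable S B hz
          rw [if_pos hz, Set.indicator_of_mem this]; rfl
        · rw [if_neg hz]
          exact Set.indicator_nonneg (fun _ _ => zero_le_one) _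
      rw [hfSdef]
      dsimp only
      linarith
    have hT_pt : ∀ j, fT (ω.2 j) ≤
        (if hhat (ω.2 j).1 ≠ (ω.2 j).2 then (1:ℝ) else 0)
          - (if hhat (ω.2 j).1 ≠ h' (ω.2 j).1 then (1:ℝ) else 0) := by
      intro j
      have h1 : Set.indicator Bt (1 : Z → ℝ) (ω.2 j) ≤
          (if hhat (ω.2 j).1 ≠ (ω.2 j).2 then (1:ℝ) else 0) := by
        by_cases hz : ω.2 j ∈ Bt
        · have hzB : ω.2 j ∈ B := by
            by_contra hzB
            exact hnoT j ⟨hz, hzB⟩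
          have : hhat (ω.2 j).1 ≠ (ω.2 j).2 := hzB
          rw [Set.indicator_of_mem hz, if_pos this]
          simp
        · rw [Set.indicator_of_notMem hz]
          split <;> norm_num
      have h2 : (if hhat (ω.2 j).1 ≠ h' (ω.2 j).1 then (1:ℝ) else 0) ≤
          Set.indicator At (1 : Z → ℝ) (ω.2 j) := by
        by_cases hz : hhat (ω.2 j).1 ≠ h' (ω.2 j).1
        · have : ω.2 j ∈ At := subset_toMeasurable TX A hz
          rw [if_pos hz, Set.indicator_of_mem this]; rfl
        · rw [if_neg hz]
          exact Set.indicator_nonneg (fun _ _ => zero_le_one) _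
      rw [hfTdef]
      dsimp only
      linarith
    -- sum the comparisons
    have hNSpos : (0:ℝ) < nS := by exact_mod_cast hnS
    have hNTpos : (0:ℝ) < nT := by exact_mod_cast hnT
    have hsumS : ∑ i, fS (ω.1 i) ≤
        (∑ i, (if hhat (ω.1 i).1 ≠ h' (ω.1 i).1 then (1:ℝ) else 0))
          - ∑ i, (if hhat (ω.1 i).1 ≠ (ω.1 i).2 then (1:ℝ) else 0) := by
      rw [← Finset.sum_sub_distrib]
      exact Finset.sum_le_sum fun i _ => hS_pt i
    have hsumT : ∑ j, fT (ω.2 j) ≤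
        (∑ j, (if hhat (ω.2 j).1 ≠ (ω.2 j).2 then (1:ℝ) else 0))
          - ∑ j, (if hhat (ω.2 j).1 ≠ h' (ω.2 j).1 then (1:ℝ) else 0) := by
      rw [← Finset.sum_sub_distrib]
      exact Finset.sum_le_sum fun j _ => hT_pt j
    have hEvc : ω ∈ Evᶜ := hNsub hωN
    rw [hEvdef] at hEvc
    change ¬ ((_ : ℝ) > _) at hEvc
    push_neg at hEvc
    have hWle : W ω ≤ -a := by
      rw [hWdef]
      dsimp only
      have e1 := mul_le_mul_of_nonneg_left hsumS
        (by positivity : (0:ℝ) ≤ 1 / (nS:ℝ))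
      have e2 := mul_le_mul_of_nonneg_left hsumT
        (by positivity : (0:ℝ) ≤ 1 / (nT:ℝ))
      rw [mul_sub] at e1 e2
      linarith
    exact hωGc hWle
  have hRnull : P R = 0 := by
    rw [hPdef]
    exact prod_innerNull _ _ hFS hFT R hRm hRsub
  -- glue
  have hNG : N ⊆ G ∪ R := by
    intro ω hω
    by_cases hg : ω ∈ G
    · exact Or.inl hg
    · exact Or.inr ⟨hω, hg⟩
  have hNbound : P N ≤ ENNReal.ofReal δ := by
    calc P N ≤ P (G ∪ R) := measure_mono hNG
      _ ≤ P G + P R := measure_union_le _ _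
      _ = P G := by rw [hRnull, add_zero]
      _ ≤ ENNReal.ofReal δ := hGbound
  have hEvmeas : P Ev = 1 - P N := by
    rw [hNdef, prob_compl_eq_one_sub (measurableSet_toMeasurable P Ev),
      measure_toMeasurable]
    rw [ENNReal.sub_sub_cancel ENNReal.one_ne_top prob_le_one]
  calc ENNReal.ofReal (1 - δ) = 1 - ENNReal.ofReal δ := by
        rw [ENNReal.ofReal_sub 1 hδ0.le, ENNReal.ofReal_one]
    _ ≤ 1 - P N := tsub_le_tsub_left hNbound 1
    _ = P Ev := hEvmeas.symm
    _ = P Ev := rfl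
end

section
/- The D-BAT disagreement objective is not convex in the logits: the function g : (Fin 3 → ℝ) → ℝ defined by g(v) = Real.log(1 + Real.exp(v 0) / (Real.exp(v 1) + Real.exp(v 2))) is not convex on (Fin 3 → ℝ), i.e., ¬ ConvexOn ℝ Set.univ g. -/
/-- The D-BAT disagreement objective is not convex in the logits. -/
theorem dbat_loss_not_convex :
    ¬ ConvexOn ℝ Set.univ (fun v : Fin 3 → ℝ =>
      Real.log (1 + Real.exp (v 0) / (Real.exp (v 1) + Real.exp (v 2)))) := by
  intro h
  have key := h.2 (Set.mem_univ ![(0:ℝ),0,-2]) (Set.mem_univ ![(0:ℝ),-2,0])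
    (by norm_num : (0:ℝ) ≤ 1/2) (by norm_num : (0:ℝ) ≤ 1/2) (by norm_num : (1:ℝ)/2 + 1/2 = 1)
  have hmid : ((1:ℝ)/2) • ![(0:ℝ),0,-2] + ((1:ℝ)/2) • ![(0:ℝ),-2,0] = ![(0:ℝ),-1,-1] := by
    funext i
    fin_cases i <;> simp <;> norm_num
  rw [hmid] at key
  simp only [Matrix.cons_val_zero, Matrix.cons_val_one, Matrix.head_cons,
    Matrix.cons_val_two, Matrix.tail_cons, smul_eq_mul] at key
  have he2 : (0:ℝ) < Real.exp (-2) := Real.exp_pos _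
  have he1 : (0:ℝ) < Real.exp (-1) := Real.exp_pos _
  have harg1 : (0:ℝ) < 1 + Real.exp 0 / (Real.exp 0 + Real.exp (-2)) := by positivity
  have harg2 : (0:ℝ) < 1 + Real.exp 0 / (Real.exp (-2) + Real.exp 0) := by positivity
  have hlt : 1 + Real.exp 0 / (Real.exp 0 + Real.exp (-2))
      < 1 + Real.exp 0 / (Real.exp (-1) + Real.exp (-1)) := by
    have h1 : Real.exp 0 / (Real.exp 0 + Real.exp (-2)) < 1 := by
      rw [div_lt_one (by positivity), Real.exp_zero]
      linarith
    have h2 : (1:ℝ) < Real.exp 0 / (Real.exp (-1) + Real.exp (-1)) := by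
      rw [lt_div_iff₀ (by positivity), Real.exp_zero]
      have h3 : Real.exp (-1) < 1/2 := by
        rw [Real.exp_neg, inv_lt_iff_one_lt_mul₀ (Real.exp_pos 1)]
        have := Real.exp_one_gt_d9
        nlinarith
      linarith
    linarith
  have hlt' : 1 + Real.exp 0 / (Real.exp (-2) + Real.exp 0)
      < 1 + Real.exp 0 / (Real.exp (-1) + Real.exp (-1)) := by
    rwa [add_comm (Real.exp (-2))]
  have hlog1 := Real.log_lt_log harg1 hlt
  have hlog2 := Real.log_lt_log harg2 hlt'
  linarith
end

section
/- Let Y be a finite type with K := |Y| ≥ 2, let m, n ≥ 1 be integers, and fix pseudo-labels a_1, …, a_m ∈ Y (for the source points) and b_1, …, b_n ∈ Y (for the target points). Then the empirical disagreement-discrepancy surrogate objective L̂ : ((Fin m → (Y → ℝ)) × (Fin n → (Y → ℝ))) → ℝ given by L̂(u, w) = (1/m)·Σ_{i} [−(1/log K)·log(exp(u_i (a_i)) / Σ_{j ∈ Y} exp(u_i j))] + (1/n)·Σ_{i} [(1/log 2)·log(1 + exp(w_i (b_i) − (1/(K−1))·Σ_{j ≠ b_i} w_i j))] is convex on the whole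 space, i.e., ConvexOn ℝ Set.univ L̂. -/
open Finset

lemma convexOn_comp_linear {E F : Type*} [AddCommGroup E] [Module ℝ E]
    [AddCommGroup F] [Module ℝ F] {f : F → ℝ}
    (hf : ConvexOn ℝ Set.univ f) (L : E →ₗ[ℝ] F) :
    ConvexOn ℝ Set.univ (fun x => f (L x)) := by
  refine ⟨convex_univ, fun x _ y _ s t hs ht hst => ?_⟩
  simpa [map_add, map_smul] using hf.2 (Set.mem_univ (L x)) (Set.mem_univ (L y)) hs ht hst

lemma convexOn_linear {E : Type*} [AddCommGroup E] [Module ℝ E] (L : E →ₗ[ℝ] ℝ) :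
    ConvexOn ℝ Set.univ (fun x => L x) := by
  refine ⟨convex_univ, fun x _ y _ s t hs ht hst => ?_⟩
  simp [map_add, map_smul]

lemma convexOn_finset_sum {ι E : Type*} [AddCommGroup E] [Module ℝ E]
    (t : Finset ι) {f : ι → E → ℝ} (h : ∀ i ∈ t, ConvexOn ℝ Set.univ (f i)) :
    ConvexOn ℝ Set.univ (fun x => ∑ i ∈ t, f i x) := by
  classical
  induction t using Finset.induction with
  | empty => simpa using convexOn_const (0 : ℝ) convex_univ
  | insert a s hnot ih =>
    simp only [Finset.sum_insert hnot]
    exact (h a (Finset.mem_insert_self a s)).add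
      (ih fun i hi => h i (Finset.mem_insert_of_mem hi))

lemma convexOn_logsumexp {Y : Type*} [Fintype Y] [Nonempty Y] :
    ConvexOn ℝ Set.univ (fun v : Y → ℝ => Real.log (∑ j, Real.exp (v j))) := by
  refine ⟨convex_univ, fun x _ y _ s t hs ht hst => ?_⟩
  rcases eq_or_lt_of_le hs with h0 | hs'
  · have ht1 : t = 1 := by linarith
    simp [← h0, ht1]
  rcases eq_or_lt_of_le ht with h1 | ht'
  · have hs1 : s = 1 := by linarith
    simp [← h1, hs1]
  have hs1 : s < 1 := by linarith
  have hpq : Real.HolderConjugate (1 / s) (1 / t) := by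
    rw [Real.holderConjugate_iff]
    constructor
    · rw [lt_div_iff₀ hs']; linarith
    · field_simp
      linarith
  have hsum : ∀ z : Y → ℝ, (0:ℝ) < ∑ j, Real.exp (z j) := fun z =>
    Finset.sum_pos (fun j _ => Real.exp_pos _) Finset.univ_nonempty
  have H := Real.inner_le_Lp_mul_Lq_of_nonneg (s := (Finset.univ : Finset Y))
      (f := fun j => Real.exp (s * x j)) (g := fun j => Real.exp (t * y j)) hpq
      (fun i _ => (Real.exp_pos _).le) (fun i _ => (Real.exp_pos _).le)
  have hrw1 : ∀ j : Y, Real.exp (s * x j) ^ (1 / s) = Real.exp (x j) := by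
    intro j
    rw [← Real.exp_mul]
    congr 1
    field_simp
  have hrw2 : ∀ j : Y, Real.exp (t * y j) ^ (1 / t) = Real.exp (y j) := by
    intro j
    rw [← Real.exp_mul]
    congr 1
    field_simp
  simp only [hrw1, hrw2, one_div_one_div] at H
  have H2 : (∑ j, Real.exp ((s • x + t • y) j)) ≤
      (∑ j, Real.exp (x j)) ^ s * (∑ j, Real.exp (y j)) ^ t := by
    refine le_trans (le_of_eq ?_) H
    exact Finset.sum_congr rfl fun j _ => by
      simp [Real.exp_add, Pi.add_apply, smul_eq_mul]
  calc Real.log (∑ j, Real.exp ((s • x + t • y) j))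
      ≤ Real.log ((∑ j, Real.exp (x j)) ^ s * (∑ j, Real.exp (y j)) ^ t) :=
        Real.log_le_log (hsum _) H2
    _ = s * Real.log (∑ j, Real.exp (x j)) + t * Real.log (∑ j, Real.exp (y j)) := by
        rw [Real.log_mul (by positivity) (by positivity),
          Real.log_rpow (hsum x), Real.log_rpow (hsum y)]
    _ = s • Real.log (∑ j, Real.exp (x j)) + t • Real.log (∑ j, Real.exp (y j)) := by
        simp [smul_eq_mul]

private def boolEmbed : ℝ →ₗ[ℝ] (Bool → ℝ) where
  toFun := fun u j => if j then u else 0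
  map_add' := fun u v => by funext j; cases j <;> simp
  map_smul' := fun c u => by funext j; cases j <;> simp

lemma convexOn_log_one_add_exp : ConvexOn ℝ Set.univ (fun u : ℝ => Real.log (1 + Real.exp u)) := by
  have h := convexOn_comp_linear (convexOn_logsumexp (Y := Bool)) boolEmbed
  convert h using 2 with u
  · rfl
  · rfl
  rw [Fintype.sum_bool]
  simp [boolEmbed, add_comm]

/-- The empirical disagreement-discrepancy surrogate objective (average of the
scaled logistic loss on source points and the disagreement logistic loss on
target points) is convex in the critic's logits. -/
theorem empirical_objective_convex
    {Y : Type*} [Fintype Y] [DecidableEq Y]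
    (hK : 2 ≤ Fintype.card Y)
    (m n : ℕ) (hm : 1 ≤ m) (hn : 1 ≤ n)
    (a : Fin m → Y) (b : Fin n → Y) :
    ConvexOn ℝ Set.univ
      (fun p : (Fin m → (Y → ℝ)) × (Fin n → (Y → ℝ)) =>
        (1 / (m : ℝ)) * ∑ i : Fin m,
          (-(1 / Real.log (Fintype.card Y)) *
            Real.log (Real.exp (p.1 i (a i)) / ∑ j : Y, Real.exp (p.1 i j)))
        + (1 / (n : ℝ)) * ∑ i : Fin n,
          ((1 / Real.log 2) *
            Real.log (1 + Real.exp (p.2 i (b i) -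
              (1 / ((Fintype.card Y : ℝ) - 1)) *
                ∑ j ∈ Finset.univ.erase (b i), p.2 i j)))) := by
  classical
  have hne : Nonempty Y := Fintype.card_pos_iff.mp (by omega)
  set E := (Fin m → (Y → ℝ)) × (Fin n → (Y → ℝ))
  set cK : ℝ := 1 / Real.log (Fintype.card Y) with hcKdef
  have hcK0 : 0 ≤ cK := by
    apply one_div_nonneg.mpr
    apply Real.log_nonneg
    exact_mod_cast Nat.one_le_of_lt hK
  have hc2 : (0:ℝ) ≤ 1 / Real.log 2 := one_div_nonneg.mpr (Real.log_nonneg one_le_two)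
  have hm0 : (0:ℝ) ≤ 1 / (m:ℝ) := by positivity
  have hn0 : (0:ℝ) ≤ 1 / (n:ℝ) := by positivity
  have hsumpos : ∀ v : Y → ℝ, (0:ℝ) < ∑ j, Real.exp (v j) := fun v =>
    Finset.sum_pos (fun j _ => Real.exp_pos _) Finset.univ_nonempty
  -- convexity of each source term
  have hterm1 : ∀ i : Fin m, ConvexOn ℝ Set.univ (fun p : E =>
      -(cK) * Real.log (Real.exp (p.1 i (a i)) / ∑ j : Y, Real.exp (p.1 i j))) := by
    intro i
    have hA : ConvexOn ℝ Set.univ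
        (fun p : E => cK * Real.log (∑ j : Y, Real.exp (p.1 i j))) := by
      have := ConvexOn.smul hcK0 (convexOn_comp_linear convexOn_logsumexp
        (((LinearMap.proj i).comp (LinearMap.fst ℝ (Fin m → (Y → ℝ)) (Fin n → (Y → ℝ)))) :
          E →ₗ[ℝ] (Y → ℝ)))
      simpa [smul_eq_mul] using this
    have hB : ConvexOn ℝ Set.univ (fun p : E => -cK * p.1 i (a i)) := by
      have := convexOn_linear ((((-cK) • ((LinearMap.proj (a i)).comp
        ((LinearMap.proj i).comp (LinearMap.fst ℝ (Fin m → (Y → ℝ)) (Fin n → (Y → ℝ)))))) :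
          E →ₗ[ℝ] ℝ))
      simpa [smul_eq_mul] using this
    have heq : (fun p : E =>
        -(cK) * Real.log (Real.exp (p.1 i (a i)) / ∑ j : Y, Real.exp (p.1 i j))) =
        fun p : E => cK * Real.log (∑ j : Y, Real.exp (p.1 i j)) + -cK * p.1 i (a i) := by
      funext p
      rw [Real.log_div (Real.exp_ne_zero _) (ne_of_gt (hsumpos _)), Real.log_exp]
      ring
    rw [heq]
    exact hA.add hB
  -- convexity of each target term
  have hterm2 : ∀ i : Fin n, ConvexOn ℝ Set.univ (fun p : E =>
      (1 / Real.log 2) * Real.log (1 + Real.exp (p.2 i (b i) -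
        (1 / ((Fintype.card Y : ℝ) - 1)) * ∑ j ∈ Finset.univ.erase (b i), p.2 i j))) := by
    intro i
    have := ConvexOn.smul hc2 (convexOn_comp_linear convexOn_log_one_add_exp
      ((((LinearMap.proj (b i) : (Y → ℝ) →ₗ[ℝ] ℝ) - (1 / ((Fintype.card Y : ℝ) - 1)) •
          (∑ j ∈ Finset.univ.erase (b i), (LinearMap.proj j : (Y → ℝ) →ₗ[ℝ] ℝ))).comp
        ((LinearMap.proj i).comp (LinearMap.snd ℝ (Fin m → (Y → ℝ)) (Fin n → (Y → ℝ))))) :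
          E →ₗ[ℝ] ℝ))
    simp [smul_eq_mul, LinearMap.sum_apply, mul_comm] at this ⊢
    exact this
  -- assemble
  have h1 : ConvexOn ℝ Set.univ (fun p : E => (1 / (m:ℝ)) * ∑ i : Fin m,
      (-(cK) * Real.log (Real.exp (p.1 i (a i)) / ∑ j : Y, Real.exp (p.1 i j)))) := by
    have := ConvexOn.smul hm0 (convexOn_finset_sum Finset.univ (fun i _ => hterm1 i))
    simpa [smul_eq_mul] using this
  have h2 : ConvexOn ℝ Set.univ (fun p : E => (1 / (n:ℝ)) * ∑ i : Fin n,
      ((1 / Real.log 2) * Real.log (1 + Real.exp (p.2 i (b i) -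
        (1 / ((Fintype.card Y : ℝ) - 1)) * ∑ j ∈ Finset.univ.erase (b i), p.2 i j)))) := by
    have := ConvexOn.smul hn0 (convexOn_finset_sum Finset.univ (fun i _ => hterm2 i))
    simpa [smul_eq_mul] using this
  simpa [Pi.add_def] using h1.add h2
end

section
/- Let Y be a finite type with exactly two elements, let m, n ≥ 1 be integers, fix pseudo-labels a_1, …, a_m ∈ Y and b_1, …, b_n ∈ Y, and let u_1, …, u_m : Y → ℝ and w_1, …, w_n : Y → ℝ be logit vectors each having distinct coordinates (no ties). Writing pred(v) for the unique label maximizing v, define the empirical surrogate loss L̂ = (1/m)·Σ_i [−(1/log 2)·log(exp(u_i (a_i)) / Σ_{j ∈ Y} exp(u_i j))] + (1/n)·Σ_i [(1/log 2)·log(1 + exp(w_i (b_i) − w_i (flip b_i)))], where flip y is the other label, and the empirical disagreement discrepancy Δ̂ = (1/n)·Σ_i 1{pred(w_i) ≠ b_i} − (1/m)·Σ_i 1{pred(u_i) ≠ a_i}. Then 1 − L̂ ≤ Δ̂. -/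
open Finset

lemma aux_loss_nonneg (c : ℝ) : 0 ≤ (1 / Real.log 2) * Real.log (1 + Real.exp c) := by
  have h2 : 0 < Real.log 2 := Real.log_pos (by norm_num)
  have : 0 ≤ Real.log (1 + Real.exp c) :=
    Real.log_nonneg (by nlinarith [Real.exp_pos c])
  positivity

lemma aux_loss_ge_one {c : ℝ} (hc : 0 ≤ c) :
    1 ≤ (1 / Real.log 2) * Real.log (1 + Real.exp c) := by
  have h2 : 0 < Real.log 2 := Real.log_pos (by norm_num)
  have he : (2 : ℝ) ≤ 1 + Real.exp c := by
    have := Real.one_le_exp hc; linarith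
  have hlog : Real.log 2 ≤ Real.log (1 + Real.exp c) :=
    Real.log_le_log (by norm_num) he
  rw [one_div, inv_mul_eq_div, le_div_iff₀ h2, one_mul]
  exact hlog

/-- In binary classification, one minus the empirical surrogate objective lower
bounds the empirical disagreement discrepancy. -/
theorem one_minus_surrogate_le_discrepancy
    {Y : Type*} [Fintype Y] [DecidableEq Y] (hcard : Fintype.card Y = 2)
    (flip : Y → Y) (hflip : ∀ y : Y, flip y ≠ y)
    (pred : (Y → ℝ) → Y)
    (hpred : ∀ v : Y → ℝ, Function.Injective v → ∀ j : Y, v j ≤ v (pred v))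
    (m n : ℕ) (hm : 1 ≤ m) (hn : 1 ≤ n)
    (a : Fin m → Y) (b : Fin n → Y)
    (u : Fin m → (Y → ℝ)) (w : Fin n → (Y → ℝ))
    (hu : ∀ i : Fin m, Function.Injective (u i))
    (hw : ∀ i : Fin n, Function.Injective (w i)) :
    1 - ((1 / (m : ℝ)) * ∑ i : Fin m,
          (-(1 / Real.log 2) *
            Real.log (Real.exp (u i (a i)) / ∑ j : Y, Real.exp (u i j)))
        + (1 / (n : ℝ)) * ∑ i : Fin n,
          ((1 / Real.log 2) *
            Real.log (1 + Real.exp (w i (b i) - w i (flip (b i)))))) ≤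
      (1 / (n : ℝ)) * ∑ i : Fin n, (if pred (w i) ≠ b i then (1 : ℝ) else 0)
        - (1 / (m : ℝ)) * ∑ i : Fin m, (if pred (u i) ≠ a i then (1 : ℝ) else 0) := by
  have hmpos : (0:ℝ) < m := by exact_mod_cast hm
  have hnpos : (0:ℝ) < n := by exact_mod_cast hn
  -- universe is {y, flip y}
  have huniv : ∀ y : Y, (univ : Finset Y) = {y, flip y} := by
    intro y
    symm
    apply Finset.eq_univ_of_card
    rw [Finset.card_insert_of_notMem
      (fun h => hflip y (Finset.mem_singleton.mp h).symm),
      Finset.card_singleton, hcard]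
  have hne_eq : ∀ (y z : Y), z ≠ y → z = flip y := by
    intro y z hz
    have : z ∈ (univ : Finset Y) := Finset.mem_univ z
    rw [huniv y, Finset.mem_insert, Finset.mem_singleton] at this
    tauto
  -- rewrite the logistic loss
  have hlog_eq : ∀ i : Fin m,
      -(1 / Real.log 2) * Real.log (Real.exp (u i (a i)) / ∑ j : Y, Real.exp (u i j))
        = (1 / Real.log 2) * Real.log (1 + Real.exp (u i (flip (a i)) - u i (a i))) := by
    intro i
    have hsum : (∑ j : Y, Real.exp (u i j))
        = Real.exp (u i (a i)) + Real.exp (u i (flip (a i))) := by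
      rw [huniv (a i), Finset.sum_insert (by
        simp only [Finset.mem_singleton]
        exact fun h => (hflip (a i)) h.symm), Finset.sum_singleton]
    have hea : (0:ℝ) < Real.exp (u i (a i)) := Real.exp_pos _
    have hratio : Real.exp (u i (a i)) / (∑ j : Y, Real.exp (u i j))
        = (1 + Real.exp (u i (flip (a i)) - u i (a i)))⁻¹ := by
      rw [hsum, Real.exp_sub]
      rw [eq_comm, inv_eq_one_div, div_eq_div_iff (by positivity) (by positivity)]
      field_simp
    rw [hratio, Real.log_inv]
    ring
  -- termwise bound for source
  have hsrc : ∀ i : Fin m,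
      (if pred (u i) ≠ a i then (1:ℝ) else 0) ≤
        -(1 / Real.log 2) * Real.log (Real.exp (u i (a i)) / ∑ j : Y, Real.exp (u i j)) := by
    intro i
    rw [hlog_eq i]
    by_cases h : pred (u i) = a i
    · rw [if_neg (not_not_intro h)]
      exact aux_loss_nonneg _
    · rw [if_pos h]
      apply aux_loss_ge_one
      have hp : pred (u i) = flip (a i) := hne_eq _ _ h
      have := hpred (u i) (hu i) (a i)
      rw [hp] at this
      linarith
  -- termwise bound for target
  have htgt : ∀ i : Fin n,
      1 - (if pred (w i) ≠ b i then (1:ℝ) else 0) ≤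
        (1 / Real.log 2) * Real.log (1 + Real.exp (w i (b i) - w i (flip (b i)))) := by
    intro i
    by_cases h : pred (w i) = b i
    · rw [if_neg (not_not_intro h), sub_zero]
      apply aux_loss_ge_one
      have := hpred (w i) (hw i) (flip (b i))
      rw [h] at this
      linarith
    · rw [if_pos h]
      have := aux_loss_nonneg (w i (b i) - w i (flip (b i)))
      linarith
  -- sum bounds
  have hS : (1 / (m : ℝ)) * ∑ i : Fin m, (if pred (u i) ≠ a i then (1:ℝ) else 0)
      ≤ (1 / (m : ℝ)) * ∑ i : Fin m,
        (-(1 / Real.log 2) * Real.log (Real.exp (u i (a i)) / ∑ j : Y, Real.exp (u i j))) :=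
    mul_le_mul_of_nonneg_left (Finset.sum_le_sum fun i _ => hsrc i) (by positivity)
  have hT : (1 / (n : ℝ)) * ∑ i : Fin n, (1 - (if pred (w i) ≠ b i then (1:ℝ) else 0))
      ≤ (1 / (n : ℝ)) * ∑ i : Fin n,
        ((1 / Real.log 2) * Real.log (1 + Real.exp (w i (b i) - w i (flip (b i))))) :=
    mul_le_mul_of_nonneg_left (Finset.sum_le_sum fun i _ => htgt i) (by positivity)
  have hT' : (1 / (n : ℝ)) * ∑ i : Fin n, (1 - (if pred (w i) ≠ b i then (1:ℝ) else 0))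
      = 1 - (1 / (n : ℝ)) * ∑ i : Fin n, (if pred (w i) ≠ b i then (1:ℝ) else 0) := by
    rw [Finset.sum_sub_distrib, Finset.sum_const, Finset.card_univ, Fintype.card_fin,
      nsmul_eq_mul, mul_one, mul_sub]
    field_simp
  rw [hT'] at hT
  linarith
end
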